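/- arXiv:1610.04471 — 6 statements merged into one kernel-verified Lean document; each statement's English description precedes it below -/
import Mathlib

section
/- Let $f : (0, \delta) \to (0, \infty)$ be left-continuous, of bounded variation on compact subintervals, and regularly varying at $0$ with index $-\rho$. If $\varsigma + \rho > 0$, then $\int_x^\delta y^{-\varsigma}\,df(y) \,/\, (x^{-\varsigma}f(x)) \to -\rho/(\varsigma+\rho)$ as $x \downarrow 0$. -/
/-!
On the logarithmic scale `h u = log f (e^{-u})`, regular variation of index `-ρ` says that
`h (u + t) - h u → ρ t`. For measurable `h` this convergence is uniform for `t ∈ [0, 1]`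
(Egorov's theorem plus a measure-counting overlap argument), and summing over unit steps gives
Potter's bound `f t ≤ e^ε (t / x)^(ε - ρ) f x` for small `x ≤ t`; in particular
`x^(-ς) f x → ∞`. Potter's bound dominates the rescaled integrand `s ↦ s^(-ς-1) f (x s) / f x`
on `s > 1`, so dominated convergence gives the direct half of Karamata's theorem,
`∫_x^δ t^(-ς-1) f t dt ∼ x^(-ς) f x / (ς + ρ)`. Integrating by parts (Fubini for each measure),
`∫_{[x,δ)} y^(-ς) df(y) = δ^(-ς) f δ - x^(-ς) f x + ς ∫_x^δ t^(-ς-1) f t dt`,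
and dividing by `x^(-ς) f x` gives `-1 + ς / (ς + ρ) = -ρ / (ς + ρ)`.
Measurability comes from replacing `f` on `(0, δ]` by `f δ - μ₁ [t, δ) + μ₂ [t, δ)`.
-/

open MeasureTheory Filter Topology Set Real

theorem exists_mem_sub_mem_of_measure_lt {E : Set ℝ} {a b t : ℝ} (hE : MeasurableSet E)
    (hEab : E ⊆ Icc a b) (ht : 0 ≤ t)
    (hvol : ENNReal.ofReal (b + t - a) < volume E + volume E) :
    ∃ s ∈ E, s - t ∈ E := by
  have hshift : volume ((· + -t) ⁻¹' E) = volume E := measure_preimage_add_right _ _ _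
  have hsub : (· + -t) ⁻¹' E ⊆ Icc a (b + t) := fun s hs => by
    have := hEab hs
    simp only [mem_Icc] at this ⊢
    constructor <;> linarith
  obtain ⟨s, hs, hst⟩ := nonempty_inter_of_measure_lt_add' volume hE
    (hEab.trans (Icc_subset_Icc_right (by linarith))) hsub (by rwa [Real.volume_Icc, hshift])
  exact ⟨s, hs, by simpa [sub_eq_add_neg] using hst⟩

theorem exists_mem_sub_mem_Icc_sdiff {T : Set ℝ} {t : ℝ} (hT : T ⊆ Icc 0 2)
    (hTmeas : MeasurableSet T) (hTvol : volume T ≤ ENNReal.ofReal (1 / 4)) (ht : t ∈ Icc 0 1) :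
    ∃ s ∈ Icc 0 2 \ T, s - t ∈ Icc 0 2 \ T := by
  have hE : ENNReal.ofReal (7 / 4) ≤ volume (Icc 0 2 \ T) := by
    rw [measure_sdiff hT hTmeas.nullMeasurableSet (ne_top_of_le_ne_top ENNReal.ofReal_ne_top hTvol),
      Real.volume_Icc]
    calc ENNReal.ofReal (7 / 4) = ENNReal.ofReal (2 - 0) - ENNReal.ofReal (1 / 4) := by
          rw [← ENNReal.ofReal_sub _ (by norm_num)]; norm_num
      _ ≤ _ := tsub_le_tsub_left hTvol _
  refine exists_mem_sub_mem_of_measure_lt (measurableSet_Icc.diff hTmeas) sdiff_subset ht.1 ?_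
  calc ENNReal.ofReal (2 + t - 0) < ENNReal.ofReal (7 / 4) + ENNReal.ofReal (7 / 4) := by
        rw [← ENNReal.ofReal_add (by norm_num) (by norm_num),
          ENNReal.ofReal_lt_ofReal_iff (by norm_num)]
        linarith [ht.2]
    _ ≤ _ := add_le_add hE hE

theorem tendstoUniformlyOn_add_sub_of_tendsto {h : ℝ → ℝ} {ρ : ℝ} (hh : Measurable h)
    (hlim : ∀ t, Tendsto (fun u => h (u + t) - h u) atTop (𝓝 (ρ * t))) :
    TendstoUniformlyOn (fun u t => h (u + t) - h u) (fun t => ρ * t) atTop (Icc 0 1) := by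
  set g : ℝ → ℝ → ℝ := fun u s => h (u + s) - h u - ρ * s
  have hg : ∀ s, Tendsto (fun u => g u s) atTop (𝓝 0) := fun s => by
    simpa using (hlim s).sub_const (ρ * s)
  -- the error at `t` is controlled by the errors at any `s`, seen from `u` and from `u + t`
  have hsplit : ∀ u t s, g u t = g u s - g (u + t) (s - t) := fun u t s => by
    simp only [g, show u + t + (s - t) = u + s by ring]; ring
  rw [Metric.tendstoUniformlyOn_iff]
  by_contra! ⟨ε, hε, hfreq⟩
  rw [frequently_atTop] at hfreq
  choose u hu t ht hbig using fun n : ℕ => hfreq n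
  have hu_top : Tendsto u atTop atTop := tendsto_atTop_mono hu tendsto_natCast_atTop_atTop
  have hut_top : Tendsto (fun n => u n + t n) atTop atTop :=
    tendsto_atTop_mono (fun n => le_add_of_nonneg_right (ht n).1) hu_top
  set D : ℕ → ℝ → ℝ := fun n s => |g (u n) s| + |g (u n + t n) s|
  obtain ⟨T, hT, hTmeas, hTvol, hunif⟩ := tendstoUniformlyOn_of_ae_tendsto (μ := volume)
    (s := Icc (0:ℝ) 2) (g := fun _ => 0)
    (fun n => (by fun_prop : Measurable (D n)).stronglyMeasurable) stronglyMeasurable_const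
    measurableSet_Icc (by simp [Real.volume_Icc]) (ae_of_all _ fun s _ => by
      simpa using ((hg s).comp hu_top).abs.add ((hg s).comp hut_top).abs)
    (show (0:ℝ) < 1 / 4 by norm_num)
  obtain ⟨n, hn⟩ := (Metric.tendstoUniformlyOn_iff.1 hunif (ε / 2) (by positivity)).exists
  obtain ⟨s, hs, hst⟩ := exists_mem_sub_mem_Icc_sdiff hT hTmeas hTvol (ht n)
  have hD : ∀ s ∈ Icc 0 2 \ T, D n s < ε / 2 := fun s hs =>
    (le_abs_self _).trans_lt (by simpa using hn s hs)
  have hsmall : |g (u n) (t n)| < ε :=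
    calc |g (u n) (t n)| ≤ |g (u n) s| + |g (u n + t n) (s - t n)| := by
          rw [hsplit (u n) (t n) s]; exact abs_sub _ _
      _ < ε / 2 + ε / 2 := add_lt_add
          ((le_add_of_nonneg_right (abs_nonneg _)).trans_lt (hD s hs))
          ((le_add_of_nonneg_left (abs_nonneg _)).trans_lt (hD _ hst))
      _ = ε := add_halves ε
  have hlarge := hbig n
  rw [dist_comm, Real.dist_eq] at hlarge
  exact (hlarge.trans_lt hsmall).false

theorem TendstoUniformlyOn.exists_abs_sub_sub_mul_le {h : ℝ → ℝ} {ρ : ℝ}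
    (hunif : TendstoUniformlyOn (fun u t => h (u + t) - h u) (fun t => ρ * t) atTop (Icc 0 1))
    {ε : ℝ} (hε : 0 < ε) :
    ∃ X, ∀ u v, X ≤ u → u ≤ v → |h v - h u - ρ * (v - u)| ≤ ε * (v - u) + ε := by
  obtain ⟨X, hX⟩ := eventually_atTop.1 (Metric.tendstoUniformlyOn_iff.1 hunif ε hε)
  have hstep : ∀ u ≥ X, ∀ t ∈ Icc (0:ℝ) 1, |h (u + t) - h u - ρ * t| ≤ ε := fun u hu t ht => by
    have := hX u hu t ht
    rw [dist_comm, Real.dist_eq] at this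
    exact this.le
  have hnat : ∀ n : ℕ, ∀ u ≥ X, |h (u + n) - h u - ρ * n| ≤ n * ε := by
    intro n
    induction n with
    | zero => simp
    | succ n ih =>
      intro u hu
      have hn := hstep (u + n) (by linarith [n.cast_nonneg (α := ℝ)]) 1 ⟨zero_le_one, le_rfl⟩
      calc |h (u + ↑(n + 1)) - h u - ρ * ↑(n + 1)|
          = |(h (u + n + 1) - h (u + n) - ρ * 1) + (h (u + n) - h u - ρ * n)| := by
            push_cast; ring_nf
        _ ≤ ε + n * ε := abs_add_le _ _ |>.trans (add_le_add hn (ih u hu))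
        _ = ↑(n + 1) * ε := by push_cast; ring
  refine ⟨X, fun u v hu huv => ?_⟩
  set n := ⌊v - u⌋₊
  have hn : (n : ℝ) ≤ v - u := Nat.floor_le (by linarith)
  have hn' : v - u < n + 1 := Nat.lt_floor_add_one _
  have hrest := hstep (u + n) (by linarith [n.cast_nonneg (α := ℝ)]) (v - u - n)
    ⟨by linarith, by linarith⟩
  rw [show u + n + (v - u - n) = v by ring] at hrest
  calc |h v - h u - ρ * (v - u)|
      = |(h v - h (u + n) - ρ * (v - u - n)) + (h (u + n) - h u - ρ * n)| := by ring_nf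
    _ ≤ ε + n * ε := abs_add_le _ _ |>.trans (add_le_add hrest (hnat n u hu))
    _ ≤ ε * (v - u) + ε := by nlinarith

def IsRegularlyVaryingAtZero (F : ℝ → ℝ) (α : ℝ) : Prop :=
  ∀ l > 0, Tendsto (fun x => F (l * x) / F x) (𝓝[>] 0) (𝓝 (l ^ α))

theorem tendsto_const_mul_nhdsGT_zero {l : ℝ} (hl : 0 < l) :
    Tendsto (fun x => l * x) (𝓝[>] 0) (𝓝[>] 0) :=
  tendsto_nhdsWithin_of_tendsto_nhds_of_eventually_within _
    (by simpa using (continuous_const_mul l).tendsto 0 |>.mono_left nhdsWithin_le_nhds)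
    (eventually_nhdsWithin_of_forall fun _ hx => mul_pos hl hx)

theorem IsRegularlyVaryingAtZero.congr {F G : ℝ → ℝ} {α : ℝ} (hF : IsRegularlyVaryingAtZero F α)
    (hFG : F =ᶠ[𝓝[>] 0] G) : IsRegularlyVaryingAtZero G α := fun l hl =>
  (hF l hl).congr' <| by
    filter_upwards [hFG.comp_tendsto (tendsto_const_mul_nhdsGT_zero hl), hFG] with x hlx hx
    simp only [Function.comp] at hlx
    rw [hlx, hx]

theorem tendsto_exp_neg_atTop_nhdsGT_zero : Tendsto (fun u => exp (-u)) atTop (𝓝[>] 0) :=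
  tendsto_exp_atBot_nhdsGT.comp tendsto_neg_atTop_atBot

theorem IsRegularlyVaryingAtZero.tendsto_log_exp_neg_add_sub {F : ℝ → ℝ} {ρ : ℝ}
    (hrv : IsRegularlyVaryingAtZero F (-ρ)) (hpos : ∀ᶠ x in 𝓝[>] 0, 0 < F x) (t : ℝ) :
    Tendsto (fun u => log (F (exp (-(u + t)))) - log (F (exp (-u)))) atTop (𝓝 (ρ * t)) := by
  have hratio : Tendsto (fun u => F (exp (-t) * exp (-u)) / F (exp (-u))) atTop
      (𝓝 (exp (ρ * t))) := by
    have := (hrv _ (exp_pos (-t))).comp tendsto_exp_neg_atTop_nhdsGT_zero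
    rwa [← exp_mul, neg_mul_neg, mul_comm] at this
  have hlog := (continuousAt_log (exp_pos _).ne').tendsto.comp hratio
  rw [log_exp] at hlog
  refine hlog.congr' ?_
  have hshift :=
    tendsto_exp_neg_atTop_nhdsGT_zero.comp (tendsto_atTop_add_const_right _ t tendsto_id)
  filter_upwards [tendsto_exp_neg_atTop_nhdsGT_zero.eventually hpos, hshift.eventually hpos]
    with u hu hut
  simp only [Function.comp_apply, id] at hut ⊢
  rw [← exp_add, ← neg_add, add_comm t, log_div hut.ne' hu.ne']

theorem IsRegularlyVaryingAtZero.eventually_le_rpow_mul {F : ℝ → ℝ} {ρ ε : ℝ}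
    (hF : Measurable F) (hpos : ∀ᶠ x in 𝓝[>] 0, 0 < F x) (hrv : IsRegularlyVaryingAtZero F (-ρ))
    (hε : 0 < ε) :
    ∀ᶠ x₀ in 𝓝[>] 0, ∀ x t, 0 < x → x ≤ t → t ≤ x₀ → F t ≤ exp ε * (t / x) ^ (ε - ρ) * F x := by
  let h : ℝ → ℝ := fun u => log (F (exp (-u)))
  have hlim : ∀ t, Tendsto (fun u => h (u + t) - h u) atTop (𝓝 (ρ * t)) :=
    hrv.tendsto_log_exp_neg_add_sub hpos
  obtain ⟨X, hX⟩ :=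
    (tendstoUniformlyOn_add_sub_of_tendsto (by fun_prop) hlim).exists_abs_sub_sub_mul_le hε
  obtain ⟨a, ha, hFa⟩ := (mem_nhdsGT_iff_exists_Ioo_subset' zero_lt_one).1 hpos
  filter_upwards [Ioo_mem_nhdsGT (lt_min ha (exp_pos (-X)))] with x₀ hx₀ x t hx hxt htx₀
  have ht : 0 < t := hx.trans_le hxt
  have hta : t < min a (exp (-X)) := htx₀.trans_lt hx₀.2
  have hFx : 0 < F x := hFa ⟨hx, by linarith [min_le_left a (exp (-X))]⟩
  have hFt : 0 < F t := hFa ⟨ht, by linarith [min_le_left a (exp (-X))]⟩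
  have hlog := (abs_le.1 (hX (-log t) (-log x)
    (by rw [le_neg, ← log_exp (-X)]; exact log_le_log ht (hta.trans_le (min_le_right _ _)).le)
    (neg_le_neg (log_le_log hx hxt)))).1
  simp only [h, neg_neg, exp_log hx, exp_log ht] at hlog
  rw [show -log x - -log t = log (t / x) by rw [log_div ht.ne' hx.ne']; ring] at hlog
  calc F t = exp (log (F t)) := (exp_log hFt).symm
    _ ≤ exp (ε + log (t / x) * (ε - ρ) + log (F x)) := exp_le_exp.2 (by nlinarith)
    _ = exp ε * (t / x) ^ (ε - ρ) * F x := by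
      rw [exp_add, exp_add, exp_log hFx, rpow_def_of_pos (div_pos ht hx)]

theorem IsRegularlyVaryingAtZero.tendsto_rpow_mul_atTop {F : ℝ → ℝ} {ρ ς : ℝ}
    (hF : Measurable F) (hpos : ∀ᶠ x in 𝓝[>] 0, 0 < F x) (hrv : IsRegularlyVaryingAtZero F (-ρ))
    (hςρ : 0 < ς + ρ) :
    Tendsto (fun x => x ^ (-ς) * F x) (𝓝[>] 0) atTop := by
  set ε := (ς + ρ) / 2
  have hε : 0 < ε := half_pos hςρ
  obtain ⟨x₀, hpotter, hx₀, hFx₀⟩ := ((hrv.eventually_le_rpow_mul hF hpos hε).and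
    ((eventually_mem_nhdsWithin (a := (0:ℝ)) (s := Ioi 0)).and hpos)).exists
  rw [mem_Ioi] at hx₀
  refine tendsto_atTop_mono' _ ?_ ((tendsto_rpow_neg_nhdsGT_zero (neg_lt_zero.2 hε)).const_mul_atTop
    (by positivity : 0 < F x₀ / (exp ε * x₀ ^ (ε - ρ))))
  filter_upwards [Ioo_mem_nhdsGT hx₀] with x ⟨hx, hxx₀⟩
  have h := hpotter x x₀ hx hxx₀.le le_rfl
  rw [div_rpow hx₀.le hx.le] at h
  calc F x₀ / (exp ε * x₀ ^ (ε - ρ)) * x ^ (-ε)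
      = x ^ (-ς) * (F x₀ / (exp ε * (x₀ ^ (ε - ρ) / x ^ (ε - ρ)))) := by
        rw [show -ε = -ς + (ε - ρ) by ring, rpow_add hx]
        field_simp
    _ ≤ x ^ (-ς) * F x := by
        refine mul_le_mul_of_nonneg_left ?_ (by positivity)
        rwa [div_le_iff₀ (by positivity), mul_comm]

theorem setIntegral_Ioc_rpow_mul_eq {G : ℝ → ℝ} {c x b : ℝ} (hx : 0 < x) :
    ∫ t in Ioc x b, t ^ (c - 1) * G t =
      x ^ c * ∫ s in Ioc 1 (b / x), s ^ (c - 1) * G (x * s) := by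
  have hsub := Measure.setIntegral_comp_smul_of_pos volume (fun t => t ^ (c - 1) * G t)
    (Ioc 1 (b / x)) hx
  simp only [LinearOrderedField.smul_Ioc hx, smul_eq_mul, mul_one, mul_div_cancel₀ b hx.ne',
    Module.finrank_self, pow_one] at hsub
  have hcongr : ∀ s ∈ Ioc (1:ℝ) (b / x),
      (x * s) ^ (c - 1) * G (x * s) = x ^ (c - 1) * (s ^ (c - 1) * G (x * s)) := fun s hs => by
    rw [mul_rpow hx.le (zero_le_one.trans hs.1.le), mul_assoc]
  rw [setIntegral_congr_fun measurableSet_Ioc hcongr, integral_const_mul,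
    rpow_sub_one hx.ne'] at hsub
  field_simp at hsub
  linear_combination -hsub

theorem integral_Ioi_one_rpow_neg_sub_one {a : ℝ} (ha : 0 < a) :
    ∫ s in Ioi (1:ℝ), s ^ (-a - 1) = 1 / a := by
  rw [integral_Ioi_rpow_of_lt (by linarith) one_pos, one_rpow, sub_add_cancel, div_neg, neg_div,
    neg_neg]

theorem norm_indicator_Ioc_rpow_mul_div_le {F : ℝ → ℝ} {ρ ς ε C x₀ x s : ℝ} (hx : 0 < x)
    (hxx₀ : x ≤ x₀) (hs : 1 < s) (hC : 0 ≤ C) (hpos : ∀ y ∈ Ioc 0 x₀, 0 < F y)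
    (hpotter : ∀ x t, 0 < x → x ≤ t → t ≤ x₀ → F t ≤ C * (t / x) ^ (ε - ρ) * F x) :
    ‖(Ioc 1 (x₀ / x)).indicator (fun s => s ^ (-ς - 1) * (F (x * s) / F x)) s‖ ≤
      C * s ^ (-(ς + ρ - ε) - 1) := by
  have hs₀ : 0 < s := zero_lt_one.trans hs
  by_cases hmem : s ∈ Ioc 1 (x₀ / x)
  · have hxs : x * s ≤ x₀ := by rw [← le_div_iff₀' hx]; exact hmem.2
    have h := hpotter x (x * s) hx (le_mul_of_one_le_right hx.le hmem.1.le) hxs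
    rw [mul_div_cancel_left₀ s hx.ne'] at h
    have hFx := hpos x ⟨hx, hxx₀⟩
    have hFxs := hpos (x * s) ⟨by positivity, hxs⟩
    rw [indicator_of_mem hmem, norm_of_nonneg (by positivity),
      show -(ς + ρ - ε) - 1 = (-ς - 1) + (ε - ρ) by ring, rpow_add hs₀, mul_left_comm]
    exact mul_le_mul_of_nonneg_left ((div_le_iff₀ hFx).2 h) (by positivity)
  · rw [indicator_of_notMem hmem, norm_zero]
    positivity

theorem tendsto_setIntegral_Ioc_div_of_le_rpow_mul {F : ℝ → ℝ} {ρ ς ε C x₀ : ℝ}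
    (hF : Measurable F) (hx₀ : 0 < x₀) (hpos : ∀ x ∈ Ioc 0 x₀, 0 < F x)
    (hrv : IsRegularlyVaryingAtZero F (-ρ)) (hςρ : 0 < ς + ρ) (hε : ε < ς + ρ)
    (hpotter : ∀ x t, 0 < x → x ≤ t → t ≤ x₀ → F t ≤ C * (t / x) ^ (ε - ρ) * F x) :
    Tendsto (fun x => (∫ t in Ioc x x₀, t ^ (-ς - 1) * F t) / (x ^ (-ς) * F x)) (𝓝[>] 0)
      (𝓝 (1 / (ς + ρ))) := by
  let φ : ℝ → ℝ → ℝ := fun x =>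
    (Ioc 1 (x₀ / x)).indicator fun s => s ^ (-ς - 1) * (F (x * s) / F x)
  have hφ : ∀ x ∈ Ioo 0 x₀,
      (∫ t in Ioc x x₀, t ^ (-ς - 1) * F t) / (x ^ (-ς) * F x) = ∫ s in Ioi 1, φ x s := by
    intro x hx
    rw [setIntegral_Ioc_rpow_mul_eq hx.1, setIntegral_indicator measurableSet_Ioc,
      inter_eq_right.2 Ioc_subset_Ioi_self, mul_div_mul_left _ _ (rpow_pos_of_pos hx.1 _).ne']
    simp only [mul_div_assoc', integral_div]
  have hC : 0 ≤ C := by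
    have h := hpotter x₀ x₀ hx₀ le_rfl le_rfl
    rw [div_self hx₀.ne', one_rpow, mul_one] at h
    nlinarith [hpos x₀ ⟨hx₀, le_rfl⟩]
  have hlim : ∀ s ∈ Ioi (1:ℝ), Tendsto (φ · s) (𝓝[>] 0) (𝓝 (s ^ (-(ς + ρ) - 1))) := by
    intro s hs1
    have hs : 0 < s := zero_lt_one.trans hs1
    rw [show -(ς + ρ) - 1 = (-ς - 1) + -ρ by ring, rpow_add hs]
    refine ((hrv s hs).const_mul _).congr' ?_
    filter_upwards [Ioo_mem_nhdsGT (div_pos hx₀ hs)] with x hx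
    have hmem : s ∈ Ioc 1 (x₀ / x) := ⟨hs1, (le_div_iff₀' hx.1).2 ((lt_div_iff₀ hs).1 hx.2).le⟩
    simp only [φ, indicator_of_mem hmem, mul_comm x s]
  have hdct : Tendsto (fun x => ∫ s in Ioi 1, φ x s) (𝓝[>] 0)
      (𝓝 (∫ s in Ioi (1:ℝ), s ^ (-(ς + ρ) - 1))) :=
    tendsto_integral_filter_of_dominated_convergence _
      (Eventually.of_forall fun x => ((by fun_prop : Measurable fun s =>
        s ^ (-ς - 1) * (F (x * s) / F x)).indicator measurableSet_Ioc).aestronglyMeasurable)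
      (by filter_upwards [Ioo_mem_nhdsGT hx₀] with x hx
          exact ae_restrict_of_forall_mem measurableSet_Ioi fun s hs =>
            norm_indicator_Ioc_rpow_mul_div_le hx.1 hx.2.le hs hC hpos hpotter)
      ((integrableOn_Ioi_rpow_of_lt (by linarith) one_pos).const_mul C)
      (ae_restrict_of_forall_mem measurableSet_Ioi hlim)
  rw [integral_Ioi_one_rpow_neg_sub_one hςρ] at hdct
  refine hdct.congr' ?_
  filter_upwards [Ioo_mem_nhdsGT hx₀] with x hx using (hφ x hx).symm

theorem IsRegularlyVaryingAtZero.tendsto_setIntegral_rpow_mul_div {F : ℝ → ℝ} {δ ρ ς : ℝ}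
    (hF : Measurable F) (hδ : 0 < δ) (hpos : ∀ x ∈ Ioo 0 δ, 0 < F x)
    (hrv : IsRegularlyVaryingAtZero F (-ρ)) (hςρ : 0 < ς + ρ)
    (hint : ∀ x > 0, IntegrableOn (fun t => t ^ (-ς - 1) * F t) (Ioc x δ)) :
    Tendsto (fun x => (∫ t in Ioc x δ, t ^ (-ς - 1) * F t) / (x ^ (-ς) * F x)) (𝓝[>] 0)
      (𝓝 (1 / (ς + ρ))) := by
  have hpos' : ∀ᶠ x in 𝓝[>] 0, 0 < F x := eventually_of_mem (Ioo_mem_nhdsGT hδ) hpos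
  obtain ⟨x₀, hpotter, hx₀, hx₀δ⟩ :=
    ((hrv.eventually_le_rpow_mul hF hpos' (half_pos hςρ)).and (Ioo_mem_nhdsGT hδ)).exists
  have hhead := tendsto_setIntegral_Ioc_div_of_le_rpow_mul hF hx₀
    (fun x hx => hpos x ⟨hx.1, hx.2.trans_lt hx₀δ⟩) hrv hςρ (half_lt_self hςρ) hpotter
  have htail := (tendsto_const_nhds (x := ∫ t in Ioc x₀ δ, t ^ (-ς - 1) * F t)).div_atTop
    (hrv.tendsto_rpow_mul_atTop hF hpos' hςρ)
  rw [← add_zero (1 / (ς + ρ))]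
  refine (hhead.add htail).congr' ?_
  filter_upwards [Ioo_mem_nhdsGT hx₀] with x hx
  rw [← add_div, ← setIntegral_union (Ioc_disjoint_Ioc_of_le le_rfl) measurableSet_Ioc
    ((hint x hx.1).mono_set (Ioc_subset_Ioc_right hx₀δ.le)) (hint x₀ hx₀),
    Ioc_union_Ioc_eq_Ioc hx.2.le hx₀δ.le]

theorem setIntegral_Ico_eq_sub_setIntegral_deriv_mul (μ : Measure ℝ) [IsLocallyFiniteMeasure μ]
    {φ φ' : ℝ → ℝ} {a b : ℝ} (hφ : ∀ t ∈ Icc a b, HasDerivAt φ (φ' t) t)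
    (hφ' : IntegrableOn φ' (Ioc a b)) :
    ∫ y in Ico a b, φ y ∂μ = φ b * μ.real (Ico a b) - ∫ t in Ioc a b, φ' t * μ.real (Ico a t) := by
  have : IsFiniteMeasure (μ.restrict (Ico a b)) :=
    isFiniteMeasure_restrict.2 measure_Ico_lt_top.ne
  let G : ℝ → ℝ → ℝ := fun y t => (Ioi y).indicator φ' t
  have hFTC : ∀ y ∈ Ico a b, φ y = φ b - ∫ t in Ioc a b, G y t := by
    intro y hy
    rw [setIntegral_indicator measurableSet_Ioi, Ioc_inter_Ioi, max_eq_right hy.1,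
      ← intervalIntegral.integral_of_le hy.2.le, intervalIntegral.integral_eq_sub_of_hasDerivAt
        (fun t ht => hφ t (Icc_subset_Icc_left hy.1 (uIcc_of_le hy.2.le ▸ ht)))
        ((intervalIntegrable_iff_integrableOn_Ioc_of_le hy.2.le).2
          (hφ'.mono_set (Ioc_subset_Ioc_left hy.1)))]
    ring
  have hG : Integrable (Function.uncurry G)
      ((μ.restrict (Ico a b)).prod (volume.restrict (Ioc a b))) := by
    have hGind : Function.uncurry G = {p : ℝ × ℝ | p.1 < p.2}.indicator fun p => φ' p.2 := by
      funext ⟨y, t⟩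
      simp [G, indicator_apply]
    rw [hGind]
    exact (hφ'.comp_snd _).indicator (measurableSet_lt measurable_fst measurable_snd)
  have hinner : ∀ t ∈ Ioc a b, ∫ y in Ico a b, G y t ∂μ = φ' t * μ.real (Ico a t) := by
    intro t ht
    have hGt : (fun y => G y t) = (Iio t).indicator fun _ => φ' t := by
      ext y; simp [G, indicator_apply]
    rw [hGt, setIntegral_indicator measurableSet_Iio, Ico_inter_Iio, min_eq_right ht.2,
      setIntegral_const, smul_eq_mul, mul_comm]
  calc ∫ y in Ico a b, φ y ∂μ = ∫ y in Ico a b, (φ b - ∫ t in Ioc a b, G y t) ∂μ :=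
        setIntegral_congr_fun measurableSet_Ico hFTC
    _ = φ b * μ.real (Ico a b) - ∫ y in Ico a b, (∫ t in Ioc a b, G y t) ∂μ := by
        have hGl : Integrable (fun y => ∫ t in Ioc a b, G y t) (μ.restrict (Ico a b)) :=
          hG.integral_prod_left
        rw [integral_sub (integrable_const _) hGl, setIntegral_const, smul_eq_mul, mul_comm]
    _ = _ := by
        rw [integral_integral_swap hG, setIntegral_congr_fun measurableSet_Ioc hinner]

theorem integrableOn_mul_measureReal_Ico (μ : Measure ℝ) [IsLocallyFiniteMeasure μ] {ψ : ℝ → ℝ}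
    {a b : ℝ} (hψ : ContinuousOn ψ (Icc a b)) :
    IntegrableOn (fun t => ψ t * μ.real (Ico a t)) (Icc a b) := by
  have hmono : Monotone fun t => μ.real (Ico a t) := fun s t hst =>
    measureReal_mono (Ico_subset_Ico_right hst) measure_Ico_lt_top.ne
  exact (hmono.locallyIntegrable.integrableOn_isCompact isCompact_Icc).continuousOn_mul hψ
    isCompact_Icc

theorem setIntegral_Ico_sub_setIntegral_Ico_eq {μ₁ μ₂ : Measure ℝ} [IsLocallyFiniteMeasure μ₁]
    [IsLocallyFiniteMeasure μ₂] {f φ φ' : ℝ → ℝ} {a b : ℝ} (hab : a ≤ b)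
    (hf : ∀ t ∈ Icc a b, f t - f a = μ₁.real (Ico a t) - μ₂.real (Ico a t))
    (hφ : ∀ t ∈ Icc a b, HasDerivAt φ (φ' t) t) (hφ' : ContinuousOn φ' (Icc a b)) :
    ∫ y in Ico a b, φ y ∂μ₁ - ∫ y in Ico a b, φ y ∂μ₂ =
      φ b * f b - φ a * f a - ∫ t in Ioc a b, φ' t * f t := by
  have hint : IntegrableOn φ' (Ioc a b) := hφ'.integrableOn_Icc.mono_set Ioc_subset_Icc_self
  have hFTC : ∫ t in Ioc a b, φ' t = φ b - φ a := by
    rw [← intervalIntegral.integral_of_le hab, intervalIntegral.integral_eq_sub_of_hasDerivAt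
      (fun t ht => hφ t (uIcc_of_le hab ▸ ht))
      ((intervalIntegrable_iff_integrableOn_Ioc_of_le hab).2 hint)]
  have h₁ := (integrableOn_mul_measureReal_Ico μ₁ hφ').mono_set Ioc_subset_Icc_self
  have h₂ := (integrableOn_mul_measureReal_Ico μ₂ hφ').mono_set Ioc_subset_Icc_self
  have hsplit : ∫ t in Ioc a b, φ' t * f t = (∫ t in Ioc a b, φ' t * μ₁.real (Ico a t))
      - (∫ t in Ioc a b, φ' t * μ₂.real (Ico a t)) + f a * ∫ t in Ioc a b, φ' t := by
    have h₁₂ : IntegrableOn (fun t => φ' t * μ₁.real (Ico a t) - φ' t * μ₂.real (Ico a t))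
        (Ioc a b) := h₁.sub h₂
    rw [← integral_sub h₁ h₂, ← integral_const_mul, ← integral_add h₁₂ (hint.const_mul _)]
    refine setIntegral_congr_fun measurableSet_Ioc fun t ht => ?_
    linear_combination φ' t * hf t (Ioc_subset_Icc_self ht)
  rw [setIntegral_Ico_eq_sub_setIntegral_deriv_mul μ₁ hφ hint,
    setIntegral_Ico_eq_sub_setIntegral_deriv_mul μ₂ hφ hint, hsplit, hFTC]
  linear_combination -φ b * hf b ⟨hab, le_rfl⟩

theorem setIntegral_Ico_rpow_sub_setIntegral_Ico_rpow {μ₁ μ₂ : Measure ℝ}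
    [IsLocallyFiniteMeasure μ₁] [IsLocallyFiniteMeasure μ₂] {f : ℝ → ℝ} {ς a b : ℝ} (ha : 0 < a)
    (hab : a ≤ b) (hf : ∀ t ∈ Icc a b, f t - f a = μ₁.real (Ico a t) - μ₂.real (Ico a t)) :
    ∫ y in Ico a b, y ^ (-ς) ∂μ₁ - ∫ y in Ico a b, y ^ (-ς) ∂μ₂ =
      b ^ (-ς) * f b - a ^ (-ς) * f a + ς * ∫ t in Ioc a b, t ^ (-ς - 1) * f t := by
  have hne : ∀ t ∈ Icc a b, t ≠ 0 := fun t ht => (ha.trans_le ht.1).ne'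
  rw [setIntegral_Ico_sub_setIntegral_Ico_eq hab hf
    (fun t ht => hasDerivAt_rpow_const (Or.inl (hne t ht)))
    (continuousOn_const.mul (continuousOn_id.rpow_const fun t ht => Or.inl (hne t ht)))]
  simp only [mul_assoc, neg_mul, integral_neg, integral_const_mul]
  ring

theorem exists_measurable_locallyIntegrable_eqOn_Ioc {μ₁ μ₂ : Measure ℝ}
    [IsLocallyFiniteMeasure μ₁] [IsLocallyFiniteMeasure μ₂] {f : ℝ → ℝ} {a b : ℝ}
    (hf : ∀ t ∈ Ioc a b, f b - f t = μ₁.real (Ico t b) - μ₂.real (Ico t b)) :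
    ∃ g : ℝ → ℝ, Measurable g ∧ LocallyIntegrable g ∧ EqOn f g (Ioc a b) := by
  have hanti : ∀ (μ : Measure ℝ) [IsLocallyFiniteMeasure μ], Antitone fun t => μ.real (Ico t b) :=
    fun μ _ s t hst => measureReal_mono (Ico_subset_Ico_left hst) measure_Ico_lt_top.ne
  refine ⟨fun t => f b - μ₁.real (Ico t b) + μ₂.real (Ico t b),
    (measurable_const.sub (hanti μ₁).measurable).add (hanti μ₂).measurable,
    ((locallyIntegrable_const _).sub (hanti μ₁).locallyIntegrable).add
      (hanti μ₂).locallyIntegrable,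
    fun t ht => ?_⟩
  linarith [hf t ht]

theorem MeasureTheory.LocallyIntegrable.integrableOn_rpow_mul_Ioc {g : ℝ → ℝ}
    (hg : LocallyIntegrable g) (c : ℝ) {x b : ℝ} (hx : 0 < x) :
    IntegrableOn (fun t => t ^ c * g t) (Ioc x b) :=
  ((hg.integrableOn_isCompact isCompact_Icc).continuousOn_mul
    (continuousOn_id.rpow_const fun _ ht => Or.inl (hx.trans_le ht.1).ne') isCompact_Icc).mono_set
    Ioc_subset_Icc_self

/-- Stieltjes form of Karamata's theorem at the origin.  The bounded-variation
left-continuous function `f` is encoded via two locally finite measures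
`μ₁, μ₂` with `f b - f a = μ₁ [a,b) - μ₂ [a,b)`, so that
`∫_{[x,δ)} y^{-ς} df(y) = ∫_{[x,δ)} y^{-ς} dμ₁ - ∫_{[x,δ)} y^{-ς} dμ₂`. -/
theorem karamata_stieltjes (f : ℝ → ℝ) (δ ρ ς : ℝ) (hδ : 0 < δ)
    (hςρ : 0 < ς + ρ)
    (μ₁ μ₂ : Measure ℝ) [IsLocallyFiniteMeasure μ₁] [IsLocallyFiniteMeasure μ₂]
    (hpos : ∀ x ∈ Set.Ioo (0:ℝ) δ, 0 < f x)
    (hbv : ∀ a b : ℝ, 0 < a → a ≤ b → b ≤ δ →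
      f b - f a = (μ₁ (Set.Ico a b)).toReal - (μ₂ (Set.Ico a b)).toReal)
    (hrv : ∀ l > (0:ℝ), Tendsto (fun x => f (l * x) / f x) (𝓝[>] (0:ℝ)) (𝓝 (l ^ (-ρ)))) :
    Tendsto (fun x =>
        ((∫ y in Set.Ico x δ, y ^ (-ς) ∂μ₁) - ∫ y in Set.Ico x δ, y ^ (-ς) ∂μ₂)
          / (x ^ (-ς) * f x))
      (𝓝[>] (0:ℝ)) (𝓝 (-ρ / (ς + ρ))) := by
  obtain ⟨g, hg, hg_int, hfg⟩ := exists_measurable_locallyIntegrable_eqOn_Ioc (μ₁ := μ₁)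
    (μ₂ := μ₂) (a := 0) fun t ht => hbv t δ ht.1 ht.2 le_rfl
  have hgpos : ∀ x ∈ Ioo 0 δ, 0 < g x := fun x hx => hfg ⟨hx.1, hx.2.le⟩ ▸ hpos x hx
  have hgrv : IsRegularlyVaryingAtZero g (-ρ) :=
    IsRegularlyVaryingAtZero.congr hrv (eventuallyEq_of_mem (Ioc_mem_nhdsGT hδ) hfg)
  have hK := hgrv.tendsto_setIntegral_rpow_mul_div hg hδ hgpos hςρ
    fun _ hx => LocallyIntegrable.integrableOn_rpow_mul_Ioc hg_int _ hx
  have hdiv := hgrv.tendsto_rpow_mul_atTop hg (eventually_of_mem (Ioo_mem_nhdsGT hδ) hgpos) hςρ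
  have hlim := (((tendsto_const_nhds (x := δ ^ (-ς) * f δ)).div_atTop hdiv).sub_const 1).add
    (hK.const_mul ς)
  rw [show (0:ℝ) - 1 + ς * (1 / (ς + ρ)) = -ρ / (ς + ρ) by field_simp; ring] at hlim
  refine hlim.congr' ?_
  filter_upwards [Ioo_mem_nhdsGT hδ] with x hx
  have hxς : x ^ (-ς) ≠ 0 := (rpow_pos_of_pos hx.1 _).ne'
  have hgx : g x ≠ 0 := (hgpos x hx).ne'
  have hfg_int : ∫ t in Ioc x δ, t ^ (-ς - 1) * f t = ∫ t in Ioc x δ, t ^ (-ς - 1) * g t :=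
    setIntegral_congr_fun measurableSet_Ioc fun t ht => by rw [hfg ⟨hx.1.trans ht.1, ht.2⟩]
  rw [setIntegral_Ico_rpow_sub_setIntegral_Ico_rpow hx.1 hx.2.le
    (fun t ht => hbv x t hx.1 ht.1 ht.2), hfg_int, hfg ⟨hx.1, hx.2.le⟩]
  field_simp
end

section
/- Let $f : (0,\delta) \to (0,\infty)$ be regularly varying at $0$ with index $\rho > 0$ and locally integrable. Then $\int_0^x y^{-1} f(y)\,dy \,/\, f(x) \to 1/\rho$ as $x \downarrow 0$. -/
open MeasureTheory Filter Topology Set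

/-- Preimage of a null set under scaling is null. -/
lemma kar_null_pre {N : Set ℝ} (hN : volume N = 0) {c : ℝ} (hc : c ≠ 0) :
    volume ((fun t => t * c) ⁻¹' N) = 0 := by
  rw [Real.volume_preimage_mul_right hc, hN, mul_zero]

set_option maxHeartbeats 1000000 in
/-- Uniform convergence theorem for regular variation at the origin, on `[1/2, 1]`. -/
lemma kar_uct (f : ℝ → ℝ) (δ ρ : ℝ) (hδ : 0 < δ) (hρ : 0 < ρ)
    (hpos : ∀ x ∈ Set.Ioo (0:ℝ) δ, 0 < f x)
    (hloc : LocallyIntegrableOn f (Set.Ioo 0 δ))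
    (hrv : ∀ l > (0:ℝ), Tendsto (fun x => f (l * x) / f x) (𝓝[>] (0:ℝ)) (𝓝 (l ^ ρ)))
    {ε : ℝ} (hε : 0 < ε) :
    ∀ᶠ x in 𝓝[>] (0:ℝ), ∀ s ∈ Set.Icc (1/2 : ℝ) 1, |f (s * x) / f x - s ^ ρ| < ε := by
  by_contra hcon
  rw [Filter.not_eventually] at hcon
  have hcon' : ∃ᶠ x in 𝓝[>] (0:ℝ), ∃ s ∈ Set.Icc (1/2:ℝ) 1, ε ≤ |f (s * x) / f x - s ^ ρ| := by
    refine hcon.mono fun x hx => ?_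
    push_neg at hx
    exact hx
  set η : ℝ := min (1/2) (ε/8) with hη_def
  have hη : 0 < η := lt_min (by norm_num) (by linarith)
  have hη2 : η ≤ 1/2 := min_le_left _ _
  have hηε : η ≤ ε/8 := min_le_right _ _
  -- extract sequences
  have hseq : ∀ n : ℕ, ∃ p : ℝ × ℝ, p.1 ∈ Set.Ioo (0:ℝ) (min (δ/2) (1/(n+1))) ∧
      p.2 ∈ Set.Icc (1/2:ℝ) 1 ∧ ε ≤ |f (p.2 * p.1) / f p.1 - p.2 ^ ρ| := by
    intro n
    have hmem : Set.Ioo (0:ℝ) (min (δ/2) (1/(n+1))) ∈ 𝓝[>] (0:ℝ) :=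
      Ioo_mem_nhdsGT_of_mem ⟨le_refl 0, by positivity⟩
    obtain ⟨x, ⟨s, hs, hbad⟩, hxm⟩ := (hcon'.and_eventually hmem).exists
    exact ⟨(x, s), hxm, hs, hbad⟩
  choose p hp1 hp2 hp3 using hseq
  set x : ℕ → ℝ := fun n => (p n).1 with hx_def
  set s : ℕ → ℝ := fun n => (p n).2 with hs_def
  have hx0 : ∀ n, 0 < x n := fun n => (hp1 n).1
  have hxδ : ∀ n, x n < δ/2 := fun n => lt_of_lt_of_le (hp1 n).2 (min_le_left _ _)
  have hx1n : ∀ n, x n < 1/(n+1) := fun n => lt_of_lt_of_le (hp1 n).2 (min_le_right _ _)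
  have hs12 : ∀ n, (1/2:ℝ) ≤ s n := fun n => (hp2 n).1
  have hs1 : ∀ n, s n ≤ 1 := fun n => (hp2 n).2
  have hs0 : ∀ n, 0 < s n := fun n => lt_of_lt_of_le (by norm_num) (hs12 n)
  set y : ℕ → ℝ := fun n => s n * x n with hy_def
  have hy0 : ∀ n, 0 < y n := fun n => mul_pos (hs0 n) (hx0 n)
  have hyx : ∀ n, y n ≤ x n := fun n =>
    mul_le_of_le_one_left (hx0 n).le (hs1 n)
  have hyδ : ∀ n, y n < δ/2 := fun n => lt_of_le_of_lt (hyx n) (hxδ n)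
  have hxtend : Tendsto x atTop (𝓝[>] (0:ℝ)) := by
    refine tendsto_nhdsWithin_of_tendsto_nhds_of_eventually_within _ ?_
      (Filter.Eventually.of_forall hx0)
    exact squeeze_zero (fun n => (hx0 n).le) (fun n => (hx1n n).le)
      tendsto_one_div_add_atTop_nhds_zero_nat
  have hytend : Tendsto y atTop (𝓝[>] (0:ℝ)) := by
    refine tendsto_nhdsWithin_of_tendsto_nhds_of_eventually_within _ ?_
      (Filter.Eventually.of_forall hy0)
    exact squeeze_zero (fun n => (hy0 n).le)
      (fun n => le_trans (hyx n) (hx1n n).le) tendsto_one_div_add_atTop_nhds_zero_nat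
  -- measurable version of f
  obtain ⟨F, hFmeas, hFeq⟩ := hloc.aestronglyMeasurable
  set N : Set ℝ := {z | z ∈ Set.Ioo (0:ℝ) δ ∧ f z ≠ F z} with hN_def
  have hN : volume N = 0 := by
    have h := (ae_restrict_iff' measurableSet_Ioo).1 hFeq
    rw [ae_iff] at h
    refine measure_mono_null ?_ h
    rintro z ⟨hz1, hz2⟩ 
    exact fun himp => hz2 (himp hz1)
  -- bad sets
  set BΦ : ℕ → Set ℝ := fun m =>
    {t | t ∈ Set.Icc (1/2:ℝ) 2 ∧ η ≤ |F (t * x m) / f (x m) - t ^ ρ|} with hBΦ_def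
  set BΨ : ℕ → Set ℝ := fun m =>
    {t | t ∈ Set.Icc (1:ℝ) 2 ∧ η ≤ |F (t * y m) / f (y m) - t ^ ρ|} with hBΨ_def
  set EΦ : ℕ → Set ℝ := fun n => ⋃ m, ⋃ (_ : n ≤ m), BΦ m with hEΦ_def
  set EΨ : ℕ → Set ℝ := fun n => ⋃ m, ⋃ (_ : n ≤ m), BΨ m with hEΨ_def
  have hBΦmeas : ∀ m, MeasurableSet (BΦ m) := by
    intro m
    have : BΦ m = Set.Icc (1/2:ℝ) 2 ∩ {t | η ≤ |F (t * x m) / f (x m) - t ^ ρ|} := rfl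
    rw [this]
    refine measurableSet_Icc.inter (measurableSet_le measurable_const ?_)
    exact (((hFmeas.measurable.comp (measurable_mul_const (x m))).div_const _).sub
      (measurable_id.pow_const ρ)).abs
  have hBΨmeas : ∀ m, MeasurableSet (BΨ m) := by
    intro m
    have : BΨ m = Set.Icc (1:ℝ) 2 ∩ {t | η ≤ |F (t * y m) / f (y m) - t ^ ρ|} := rfl
    rw [this]
    refine measurableSet_Icc.inter (measurableSet_le measurable_const ?_)
    exact (((hFmeas.measurable.comp (measurable_mul_const (y m))).div_const _).sub
      (measurable_id.pow_const ρ)).abs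
  have hEΦmeas : ∀ n, MeasurableSet (EΦ n) := fun n =>
    MeasurableSet.iUnion fun m => MeasurableSet.iUnion fun _ => hBΦmeas m
  have hEΨmeas : ∀ n, MeasurableSet (EΨ n) := fun n =>
    MeasurableSet.iUnion fun m => MeasurableSet.iUnion fun _ => hBΨmeas m
  -- exceptional null sets
  set AΦ : Set ℝ := ⋃ m, (fun t => t * x m) ⁻¹' N with hAΦ_def
  set AΨ : Set ℝ := ⋃ m, (fun t => t * y m) ⁻¹' N with hAΨ_def
  have hAΦ : volume AΦ = 0 := measure_iUnion_null fun m => kar_null_pre hN (hx0 m).ne'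
  have hAΨ : volume AΨ = 0 := measure_iUnion_null fun m => kar_null_pre hN (hy0 m).ne'
  -- intersections are null
  have hkey : ∀ (E : ℕ → Set ℝ) (B : ℕ → Set ℝ) (z : ℕ → ℝ) (A : Set ℝ) (a : ℝ),
      (E = fun n => ⋃ m, ⋃ (_ : n ≤ m), B m) →
      (A = ⋃ m, (fun t => t * z m) ⁻¹' N) →
      (∀ n, 0 < z n) → (∀ n, z n < δ/2) → Tendsto z atTop (𝓝[>] (0:ℝ)) →
      (∀ m t, t ∈ B m → t ∈ Set.Icc a 2 ∧ η ≤ |F (t * z m) / f (z m) - t ^ ρ|) →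
      (0 < a) →
      (⋂ n, E n) ⊆ A := by
    intro E B z A a hE hA hz0 hzδ hztend hB ha t ht
    by_contra hta
    rw [hA] at hta
    simp only [Set.mem_iUnion, not_exists, Set.mem_preimage] at hta
    have htmem : ∀ n, ∃ m, n ≤ m ∧ t ∈ B m := by
      intro n
      have := Set.mem_iInter.1 ht n
      rw [hE] at this
      simpa only [Set.mem_iUnion, exists_prop] using this
    obtain ⟨m₀, _, htB⟩ := htmem 0
    have htIcc : t ∈ Set.Icc a 2 := (hB m₀ t htB).1
    have htpos : 0 < t := lt_of_lt_of_le ha htIcc.1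
    have hfF : ∀ m, f (t * z m) = F (t * z m) := by
      intro m
      by_contra hne
      exact hta m ⟨⟨mul_pos htpos (hz0 m), by nlinarith [hzδ m, hz0 m, htIcc.2]⟩, hne⟩
    have hconv : Tendsto (fun m => f (t * z m) / f (z m)) atTop (𝓝 (t ^ ρ)) :=
      (hrv t htpos).comp hztend
    have hev : ∀ᶠ m in atTop, dist (f (t * z m) / f (z m)) (t ^ ρ) < η :=
      hconv (Metric.ball_mem_nhds _ hη)
    obtain ⟨n, hn⟩ := Filter.eventually_atTop.1 hev
    obtain ⟨m, hnm, htBm⟩ := htmem n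
    have h1 := (hB m t htBm).2
    rw [← hfF m] at h1
    have h2 := hn m hnm
    rw [Real.dist_eq] at h2
    exact absurd h1 (not_le.2 h2)
  have hIΦ : (⋂ n, EΦ n) ⊆ AΦ := by
    refine hkey EΦ BΦ x AΦ (1/2) rfl rfl hx0 hxδ hxtend (fun m t ht => ⟨ht.1, ht.2⟩) (by norm_num)
  have hIΨ : (⋂ n, EΨ n) ⊆ AΨ := by
    refine hkey EΨ BΨ y AΨ 1 rfl rfl hy0 hyδ hytend
      (fun m t ht => ⟨⟨le_trans (by norm_num) ht.1.1, ht.1.2⟩, ht.2⟩) (by norm_num)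
  -- measures of bad sets tend to zero
  have hμ : ∀ (E : ℕ → Set ℝ) (A : Set ℝ) (a : ℝ), (∀ n, MeasurableSet (E n)) →
      (∀ n n', n ≤ n' → E n' ⊆ E n) → (∀ n, E n ⊆ Set.Icc a 2) →
      ((⋂ n, E n) ⊆ A) → volume A = 0 →
      Tendsto (fun n => volume (E n)) atTop (𝓝 0) := by
    intro E A a hEm hanti hsub hIA hA0
    have hfin : volume (E 0) ≠ ⊤ :=
      ne_top_of_le_ne_top (by rw [Real.volume_Icc]; exact ENNReal.ofReal_ne_top)
        (measure_mono (hsub 0))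
    have h0 : volume (⋂ n, E n) = 0 := measure_mono_null hIA hA0
    have := tendsto_measure_iInter_atTop (fun n => (hEm n).nullMeasurableSet)
      (fun a b hab => hanti a b hab) ⟨0, hfin⟩
    rwa [h0] at this
  have hμΦ : Tendsto (fun n => volume (EΦ n)) atTop (𝓝 0) := by
    refine hμ EΦ AΦ (1/2) hEΦmeas ?_ ?_ hIΦ hAΦ
    · intro a b hab t ht
      simp only [hEΦ_def, Set.mem_iUnion, exists_prop] at ht ⊢
      obtain ⟨m, hm, h⟩ := ht
      exact ⟨m, hab.trans hm, h⟩
    · intro n t ht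
      simp only [hEΦ_def, Set.mem_iUnion, exists_prop] at ht
      obtain ⟨m, _, h⟩ := ht
      exact h.1
  have hμΨ : Tendsto (fun n => volume (EΨ n)) atTop (𝓝 0) := by
    refine hμ EΨ AΨ 1 hEΨmeas ?_ ?_ hIΨ hAΨ
    · intro a b hab t ht
      simp only [hEΨ_def, Set.mem_iUnion, exists_prop] at ht ⊢
      obtain ⟨m, hm, h⟩ := ht
      exact ⟨m, hab.trans hm, h⟩
    · intro n t ht
      simp only [hEΨ_def, Set.mem_iUnion, exists_prop] at ht
      obtain ⟨m, _, h⟩ := ht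
      exact h.1
  have h18 : (0:ENNReal) < ENNReal.ofReal (1/8) := ENNReal.ofReal_pos.2 (by norm_num)
  have hevΦ : ∀ᶠ n in atTop, volume (EΦ n) < ENNReal.ofReal (1/8) :=
    hμΦ.eventually_lt_const h18
  have hevΨ : ∀ᶠ n in atTop, volume (EΨ n) < ENNReal.ofReal (1/8) :=
    hμΨ.eventually_lt_const h18
  obtain ⟨n, hnΦ, hnΨ⟩ := (hevΦ.and hevΨ).exists
  -- find a good point t
  set PΨ : Set ℝ := (fun t => t * (s n)⁻¹) ⁻¹' (EΨ n) with hPΨ_def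
  set PA : Set ℝ := (fun t => t * (s n)⁻¹) ⁻¹' AΨ with hPA_def
  have hsn0 : (s n) ≠ 0 := (hs0 n).ne'
  have hPA0 : volume PA = 0 := kar_null_pre hAΨ (inv_ne_zero hsn0)
  have hPΨμ : volume PΨ ≤ volume (EΨ n) := by
    rw [hPΨ_def, Real.volume_preimage_mul_right (inv_ne_zero hsn0), inv_inv,
      abs_of_pos (hs0 n)]
    calc ENNReal.ofReal (s n) * volume (EΨ n) ≤ 1 * volume (EΨ n) :=
          mul_le_mul_left (ENNReal.ofReal_le_one.2 (hs1 n)) _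
      _ = volume (EΨ n) := one_mul _
  have hex : ∃ t ∈ Set.Icc (s n) (2 * s n), t ∉ EΦ n ∪ AΦ ∪ PΨ ∪ PA := by
    rw [← Set.not_subset]
    intro hsub
    have h1 : volume (Set.Icc (s n) (2 * s n)) ≤
        volume (EΦ n) + volume AΦ + volume PΨ + volume PA :=
      le_trans (measure_mono hsub) (le_trans (measure_union_le _ _)
        (add_le_add (le_trans (measure_union_le _ _)
          (add_le_add (measure_union_le _ _) le_rfl)) le_rfl))
    rw [Real.volume_Icc] at h1
    have h2 : ENNReal.ofReal (2 * s n - s n) ≤ ENNReal.ofReal (1/8) + ENNReal.ofReal (1/8) := by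
      calc ENNReal.ofReal (2 * s n - s n) ≤
          volume (EΦ n) + volume AΦ + volume PΨ + volume PA := h1
        _ ≤ ENNReal.ofReal (1/8) + 0 + ENNReal.ofReal (1/8) + 0 :=
            add_le_add (add_le_add (add_le_add hnΦ.le hAΦ.le) (hPΨμ.trans hnΨ.le)) hPA0.le
        _ = ENNReal.ofReal (1/8) + ENNReal.ofReal (1/8) := by ring
    rw [← ENNReal.ofReal_add (by norm_num) (by norm_num)] at h2
    have h3 : 2 * s n - s n ≤ 1/8 + 1/8 :=
      (ENNReal.ofReal_le_ofReal_iff (by norm_num)).1 h2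
    linarith [hs12 n]
  obtain ⟨t, htmem, htbad⟩ := hex
  simp only [Set.mem_union, not_or] at htbad
  obtain ⟨⟨⟨hnEΦ, hnAΦ⟩, hnPΨ⟩, hnPA⟩ := htbad
  have ht1 : s n ≤ t := htmem.1
  have ht2 : t ≤ 2 * s n := htmem.2
  have htIcc : t ∈ Set.Icc (1/2:ℝ) 2 := ⟨le_trans (hs12 n) ht1, le_trans ht2 (by linarith [hs1 n])⟩
  have htpos : 0 < t := lt_of_lt_of_le (by norm_num) htIcc.1
  set u : ℝ := t * (s n)⁻¹ with hu_def
  have hu0 : 0 < u := mul_pos htpos (inv_pos.2 (hs0 n))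
  have hu1 : 1 ≤ u := by
    rw [hu_def, ← div_eq_mul_inv, le_div_iff₀ (hs0 n)]
    linarith
  have hu2 : u ≤ 2 := by
    rw [hu_def, ← div_eq_mul_inv, div_le_iff₀ (hs0 n)]
    linarith
  have huIcc : u ∈ Set.Icc (1:ℝ) 2 := ⟨hu1, hu2⟩
  have htxδ : t * x n < δ := by
    nlinarith [hxδ n, hx0 n, mul_nonneg (sub_nonneg.2 htIcc.2) (hx0 n).le]
  have huyδ : u * y n < δ := by
    nlinarith [hyδ n, hy0 n, mul_nonneg (sub_nonneg.2 hu2) (hy0 n).le]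
  have hΦ1 : |F (t * x n) / f (x n) - t ^ ρ| < η := by
    by_contra h
    exact hnEΦ (Set.mem_iUnion.2 ⟨n, Set.mem_iUnion.2 ⟨le_refl n, htIcc, not_lt.1 h⟩⟩)
  have hfFΦ : f (t * x n) = F (t * x n) := by
    by_contra h
    exact hnAΦ (Set.mem_iUnion.2 ⟨n, ⟨⟨mul_pos htpos (hx0 n), htxδ⟩, h⟩⟩)
  have hΨ1 : |F (u * y n) / f (y n) - u ^ ρ| < η := by
    by_contra h
    exact hnPΨ (Set.mem_iUnion.2 ⟨n, Set.mem_iUnion.2 ⟨le_refl n, huIcc, not_lt.1 h⟩⟩)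
  have hfFΨ : f (u * y n) = F (u * y n) := by
    by_contra h
    exact hnPA (Set.mem_iUnion.2 ⟨n, ⟨⟨mul_pos hu0 (hy0 n), huyδ⟩, h⟩⟩)
  -- the algebra
  have key : u * y n = t * x n := by
    show t * (s n)⁻¹ * (s n * x n) = t * x n
    field_simp
  set P := f (t * x n) / f (x n) with hP_def
  set Q := f (u * y n) / f (y n) with hQ_def
  set Sv := s n ^ ρ with hSv_def
  have hP : |P - t ^ ρ| < η := by rw [hP_def, hfFΦ]; exact hΦ1
  have hQ : |Q - u ^ ρ| < η := by rw [hQ_def, hfFΨ]; exact hΨ1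
  have hA : Sv * u ^ ρ = t ^ ρ := by
    rw [hSv_def, ← Real.mul_rpow (hs0 n).le hu0.le]
    congr 1
    rw [hu_def]
    field_simp
  have hS1 : Sv ≤ 1 := Real.rpow_le_one (hs0 n).le (hs1 n) hρ.le
  have hS0 : 0 < Sv := Real.rpow_pos_of_pos (hs0 n) ρ
  have hB1 : 1 ≤ u ^ ρ := by
    calc (1:ℝ) = (1:ℝ) ^ ρ := (Real.one_rpow ρ).symm
      _ ≤ u ^ ρ := Real.rpow_le_rpow zero_le_one hu1 hρ.le
  have hQhalf : 1/2 < Q := by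
    have h := abs_sub_lt_iff.1 hQ
    linarith [h.2, hB1, hη2]
  have hQ0 : Q ≠ 0 := by linarith
  have hfx0 : 0 < f (x n) := hpos _ ⟨hx0 n, by linarith [hxδ n]⟩
  have hfy0 : 0 < f (y n) := hpos _ ⟨hy0 n, by linarith [hyδ n]⟩
  have hftx0 : 0 < f (t * x n) := hpos _ ⟨mul_pos htpos (hx0 n), htxδ⟩
  have hPQ : P / Q = f (s n * x n) / f (x n) := by
    have hyn : f (u * y n) = f (t * x n) := by rw [key]
    have hyn2 : f (y n) = f (s n * x n) := rfl
    have hfsx0 : f (s n * x n) ≠ 0 := hfy0.ne'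
    have hfx0' : f (x n) ≠ 0 := hfx0.ne'
    have hftx0' : f (t * x n) ≠ 0 := hftx0.ne'
    rw [hP_def, hQ_def, hyn, hyn2]
    rw [div_div_div_eq]
    rw [mul_comm (f (t * x n)) (f (s n * x n)), mul_div_mul_right _ _ hftx0']
  have hbad := hp3 n
  have hbad' : ε ≤ |P / Q - Sv| := by rw [hPQ, hSv_def]; exact hbad
  have e1 : |P - Sv * Q| < 2 * η := by
    have heq : P - Sv * Q = (P - t ^ ρ) - Sv * (Q - u ^ ρ) := by rw [← hA]; ring
    rw [heq]
    have h4 : |(P - t ^ ρ) - Sv * (Q - u ^ ρ)| ≤ |P - t ^ ρ| + |Sv * (Q - u ^ ρ)| := by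
      rw [sub_eq_add_neg]
      exact (abs_add_le _ _).trans (by rw [abs_neg])
    have h5 : |Sv * (Q - u ^ ρ)| = Sv * |Q - u ^ ρ| := by
      rw [abs_mul, abs_of_pos hS0]
    have h6 : Sv * |Q - u ^ ρ| ≤ |Q - u ^ ρ| :=
      mul_le_of_le_one_left (abs_nonneg _) hS1
    linarith
  have hQpos : (0:ℝ) < Q := by linarith
  have e2 : P / Q - Sv = (P - Sv * Q) / Q := by
    rw [sub_div, mul_div_cancel_right₀ _ hQ0]
  have e3 : |P / Q - Sv| < ε := by
    rw [e2, abs_div, abs_of_pos hQpos, div_lt_iff₀ hQpos]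
    have h7 : ε * (1/2) < ε * Q := mul_lt_mul_of_pos_left hQhalf hε
    linarith
  exact absurd hbad' (not_le.2 e3)

set_option maxHeartbeats 1000000 in
/-- Potter-type bound near the origin. -/
lemma kar_potter (f : ℝ → ℝ) (δ ρ : ℝ) (hδ : 0 < δ) (hρ : 0 < ρ)
    (hpos : ∀ x ∈ Set.Ioo (0:ℝ) δ, 0 < f x)
    (hloc : LocallyIntegrableOn f (Set.Ioo 0 δ))
    (hrv : ∀ l > (0:ℝ), Tendsto (fun x => f (l * x) / f x) (𝓝[>] (0:ℝ)) (𝓝 (l ^ ρ))) :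
    ∃ C x₀ : ℝ, 0 < C ∧ 0 < x₀ ∧ x₀ < δ ∧
      ∀ x ∈ Set.Ioo (0:ℝ) x₀, ∀ t : ℝ, 0 < t → t ≤ 1 →
        f (t * x) / f x ≤ C * t ^ (ρ/2) := by
  set ε₀ : ℝ := (2:ℝ) ^ (-(ρ/2)) - (2:ℝ) ^ (-ρ) with hε₀def
  have hε₀ : 0 < ε₀ := by
    have h := (Real.rpow_lt_rpow_left_iff (by norm_num : (1:ℝ) < 2)).2
      (show -ρ < -(ρ/2) by linarith)
    simp only [hε₀def]
    linarith
  obtain ⟨w, hw0, hsub⟩ := mem_nhdsGT_iff_exists_Ioo_subset.1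
    (kar_uct f δ ρ hδ hρ hpos hloc hrv hε₀)
  rw [Set.mem_Ioi] at hw0
  set x₀ : ℝ := min w (δ/2) with hx₀def
  have hx₀0 : 0 < x₀ := lt_min hw0 (by linarith)
  have hx₀δ : x₀ < δ := lt_of_le_of_lt (min_le_right _ _) (by linarith)
  have hU : ∀ x ∈ Set.Ioo (0:ℝ) x₀, ∀ s ∈ Set.Icc (1/2:ℝ) 1,
      |f (s * x) / f x - s ^ ρ| < ε₀ := by
    intro x hx
    exact hsub ⟨hx.1, lt_of_lt_of_le hx.2 (min_le_left _ _)⟩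
  set q : ℝ := (2:ℝ) ^ (-(ρ/2)) with hqdef
  have hq0 : 0 < q := Real.rpow_pos_of_pos (by norm_num) _
  have hhalfq : ((1:ℝ)/2) ^ (ρ/2) = q := by
    rw [hqdef, one_div, Real.inv_rpow (by norm_num : (0:ℝ) ≤ 2), ← Real.rpow_neg
      (by norm_num : (0:ℝ) ≤ 2)]
  have hhalfρ : ((1:ℝ)/2) ^ ρ = (2:ℝ) ^ (-ρ) := by
    rw [one_div, Real.inv_rpow (by norm_num : (0:ℝ) ≤ 2), ← Real.rpow_neg
      (by norm_num : (0:ℝ) ≤ 2)]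
  have hhalf : ∀ x ∈ Set.Ioo (0:ℝ) x₀, f ((1/2) * x) / f x ≤ q := by
    intro x hx
    have h := hU x hx (1/2) ⟨le_refl _, by norm_num⟩
    have h2 := (abs_sub_lt_iff.1 h).1
    rw [hhalfρ] at h2
    simp only [hqdef, hε₀def] at h2 ⊢
    linarith
  have hstep : ∀ k : ℕ, ∀ x ∈ Set.Ioo (0:ℝ) x₀, ∀ s : ℝ, 1/2 ≤ s → s ≤ 1 →
      f (s * (1/2)^k * x) / f x ≤ (1 + ε₀) * q ^ k := by
    intro k
    induction k with
    | zero =>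
      intro x hx s hs1 hs2
      simp only [pow_zero, mul_one]
      have h := hU x hx s ⟨hs1, hs2⟩
      have h2 := (abs_sub_lt_iff.1 h).1
      have h3 : s ^ ρ ≤ 1 := Real.rpow_le_one (by linarith) hs2 hρ.le
      linarith
    | succ k ih =>
      intro x hx s hs1 hs2
      have hx1 : 0 < x := hx.1
      have hx2 : x < x₀ := hx.2
      have hx20 : x/2 ∈ Set.Ioo (0:ℝ) x₀ := ⟨by linarith, by linarith⟩
      have harg : s * (1/2)^(k+1) * x = s * (1/2)^k * (x/2) := by ring
      have hI := ih (x/2) hx20 s hs1 hs2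
      have hH := hhalf x hx
      have hxδ' : x < δ := lt_trans hx2 hx₀δ
      have hfx : 0 < f x := hpos x ⟨hx1, hxδ'⟩
      have hfx2 : 0 < f ((1/2) * x) := hpos _ ⟨by linarith, by linarith⟩
      have middle : x/2 = (1/2) * x := by ring
      rw [harg]
      have hH' : f (x/2) / f x ≤ q := by rw [middle]; exact hH
      have hfx2' : 0 < f (x/2) := by rw [middle]; exact hfx2
      have hHnn : 0 ≤ f (x/2) / f x := le_of_lt (div_pos hfx2' hfx)
      calc f (s * (1/2)^k * (x/2)) / f x
          = (f (s * (1/2)^k * (x/2)) / f (x/2)) * (f (x/2) / f x) :=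
            (div_mul_div_cancel₀ hfx2'.ne' ).symm
        _ ≤ ((1+ε₀) * q^k) * q := by
            apply mul_le_mul hI hH' hHnn
            positivity
        _ = (1+ε₀) * q^(k+1) := by ring
  -- convert power of q into rpow of (1/2)^k
  have h1' : ∀ m : ℕ, q ^ m = (((1:ℝ)/2)^m) ^ (ρ/2) := by
    intro m
    induction m with
    | zero => simp
    | succ m ih =>
      rw [pow_succ, pow_succ, Real.mul_rpow (by positivity) (by norm_num), ih, hhalfq]
  have hqinv : q * (2:ℝ)^(ρ/2) = 1 := by
    rw [hqdef, ← Real.rpow_add (by norm_num : (0:ℝ) < 2)]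
    simp
  refine ⟨(1+ε₀) * (2:ℝ)^(ρ/2), x₀, by positivity, hx₀0, hx₀δ, ?_⟩
  intro x hx t ht0 ht1
  have hex : ∃ k : ℕ, (1/2:ℝ)^k < t := exists_pow_lt_of_lt_one ht0 (by norm_num)
  have hk₀spec := Nat.find_spec hex
  have hk₀0 : Nat.find hex ≠ 0 := by
    intro h0
    rw [h0, pow_zero] at hk₀spec
    linarith
  obtain ⟨k, hk⟩ := Nat.exists_eq_succ_of_ne_zero hk₀0
  have htle : t ≤ (1/2:ℝ)^k := by
    have := Nat.find_min hex (show k < Nat.find hex by omega)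
    exact not_lt.1 this
  have htgt : (1/2:ℝ)^(k+1) < t := by
    have h := hk₀spec
    rw [hk, Nat.succ_eq_add_one] at h
    exact h
  have hpk : (0:ℝ) < (1/2:ℝ)^k := by positivity
  set s : ℝ := t / (1/2:ℝ)^k with hsdef
  have hs2 : s ≤ 1 := (div_le_one hpk).2 htle
  have hs1 : 1/2 ≤ s := by
    rw [hsdef, le_div_iff₀ hpk]
    calc (1/2:ℝ) * (1/2)^k = (1/2)^(k+1) := by ring
      _ ≤ t := htgt.le
  have harg : s * (1/2:ℝ)^k * x = t * x := by
    rw [hsdef, div_mul_cancel₀ _ hpk.ne']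
  have hb := hstep k x hx s hs1 hs2
  rw [harg] at hb
  have h2 : q^(k+1) ≤ t^(ρ/2) := by
    rw [h1' (k+1)]
    exact Real.rpow_le_rpow (by positivity) htgt.le (by positivity)
  have h3 : q^k ≤ t^(ρ/2) * (2:ℝ)^(ρ/2) := by
    calc q^k = q^(k+1) * (2:ℝ)^(ρ/2) := by
          rw [pow_succ, mul_assoc, hqinv, mul_one]
      _ ≤ t^(ρ/2) * (2:ℝ)^(ρ/2) :=
          mul_le_mul_of_nonneg_right h2 (by positivity)
  calc f (t * x) / f x ≤ (1+ε₀) * q^k := hb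
    _ ≤ (1+ε₀) * (t^(ρ/2) * (2:ℝ)^(ρ/2)) :=
        mul_le_mul_of_nonneg_left h3 (by linarith)
    _ = (1+ε₀) * (2:ℝ)^(ρ/2) * t^(ρ/2) := by ring

/-- Direct half of Karamata's theorem at the origin: if `f` is regularly varying
at `0` with index `ρ > 0`, then `∫_0^x f(y)/y dy / f(x) → 1/ρ`. -/
theorem karamata_direct (f : ℝ → ℝ) (δ ρ : ℝ) (hδ : 0 < δ) (hρ : 0 < ρ)
    (hpos : ∀ x ∈ Set.Ioo (0:ℝ) δ, 0 < f x)
    (hloc : LocallyIntegrableOn f (Set.Ioo 0 δ))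
    (hrv : ∀ l > (0:ℝ), Tendsto (fun x => f (l * x) / f x) (𝓝[>] (0:ℝ)) (𝓝 (l ^ ρ))) :
    Tendsto (fun x => (∫ y in Set.Ioo (0:ℝ) x, f y / y) / f x)
      (𝓝[>] (0:ℝ)) (𝓝 (1 / ρ)) := by
  obtain ⟨C, x₀, hC, hx₀0, hx₀δ, hpot⟩ := kar_potter f δ ρ hδ hρ hpos hloc hrv
  obtain ⟨F, hFmeas, hFeq⟩ := hloc.aestronglyMeasurable
  have hN : volume {z | z ∈ Set.Ioo (0:ℝ) δ ∧ f z ≠ F z} = 0 := by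
    have h := (ae_restrict_iff' measurableSet_Ioo).1 hFeq
    rw [ae_iff] at h
    refine measure_mono_null ?_ h
    rintro z ⟨hz1, hz2⟩
    exact fun himp => hz2 (himp hz1)
  -- change of variables
  have hCoV : ∀ x : ℝ, 0 < x → (∫ y in Set.Ioo (0:ℝ) x, f y / y)
      = ∫ t in Set.Ioo (0:ℝ) 1, f (t * x) / t := by
    intro x hx
    have himg : (fun t : ℝ => t * x) '' Set.Ioo 0 1 = Set.Ioo 0 x := by
      ext z
      constructor
      · rintro ⟨t, ht, rfl⟩
        exact ⟨mul_pos ht.1 hx, by have h2 := mul_lt_mul_of_pos_right ht.2 hx; rw [one_mul] at h2; exact h2⟩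
      · rintro ⟨hz1, hz2⟩
        exact ⟨z / x, ⟨div_pos hz1 hx, (div_lt_one hx).2 hz2⟩, div_mul_cancel₀ _ hx.ne'⟩
    have hcv := integral_image_eq_integral_abs_deriv_smul (s := Set.Ioo (0:ℝ) 1)
      (f := fun t : ℝ => t * x) (f' := fun _ => x) measurableSet_Ioo
      (fun t _ => (hasDerivAt_mul_const x).hasDerivWithinAt)
      (fun a _ b _ h => mul_right_cancel₀ hx.ne' h) (fun y => f y / y)
    rw [himg] at hcv
    rw [hcv]
    refine setIntegral_congr_fun measurableSet_Ioo (fun t ht => ?_)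
    rw [abs_of_pos hx, smul_eq_mul]
    have hx' : x ≠ 0 := hx.ne'
    have ht' : t ≠ 0 := ht.1.ne'
    field_simp
  have hmem : Set.Ioo (0:ℝ) x₀ ∈ 𝓝[>] (0:ℝ) := Ioo_mem_nhdsGT_of_mem ⟨le_refl 0, hx₀0⟩
  have heq : (fun x => (∫ y in Set.Ioo (0:ℝ) x, f y / y) / f x)
      =ᶠ[𝓝[>] (0:ℝ)] (fun x => ∫ t in Set.Ioo (0:ℝ) 1, f (t * x) / t / f x) := by
    filter_upwards [hmem] with x hx
    rw [hCoV x hx.1, integral_div]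
  have hDCT : Tendsto (fun x => ∫ t in Set.Ioo (0:ℝ) 1, f (t * x) / t / f x) (𝓝[>] (0:ℝ))
      (𝓝 (∫ t in Set.Ioo (0:ℝ) 1, t ^ (ρ - 1))) := by
    apply tendsto_integral_filter_of_dominated_convergence
      (bound := fun t => C * t ^ (ρ/2 - 1))
    · filter_upwards [hmem] with x hx
      have hnull : volume {t | t ∈ Set.Ioo (0:ℝ) 1 ∧ f (t * x) ≠ F (t * x)} = 0 := by
        refine measure_mono_null ?_ (kar_null_pre hN hx.1.ne')
        rintro t ⟨ht, hne⟩
        exact ⟨⟨mul_pos ht.1 hx.1, by have h2 := mul_lt_mul_of_pos_right ht.2 hx.1; rw [one_mul] at h2; show t * x < δ; linarith [hx.2, hx₀δ]⟩, hne⟩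
      have hmeasF : AEStronglyMeasurable (fun t => F (t * x) / t / f x)
          (volume.restrict (Set.Ioo 0 1)) :=
        (((hFmeas.measurable.comp (measurable_mul_const x)).div measurable_id).div_const
          _).aestronglyMeasurable
      refine hmeasF.congr ?_
      refine (ae_restrict_iff' measurableSet_Ioo).2 ?_
      have hae : ∀ᵐ t ∂(volume : Measure ℝ), ¬(t ∈ Set.Ioo (0:ℝ) 1 ∧ f (t * x) ≠ F (t * x)) := by
        rw [ae_iff]
        rw [show {a | ¬¬(a ∈ Set.Ioo (0:ℝ) 1 ∧ f (a * x) ≠ F (a * x))}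
            = {t | t ∈ Set.Ioo (0:ℝ) 1 ∧ f (t * x) ≠ F (t * x)} from by
          ext a; simp only [Set.mem_setOf_eq, not_not]]
        exact hnull
      refine hae.mono fun t h ht => ?_
      by_cases hfe : f (t * x) = F (t * x)
      · show F (t * x) / t / f x = f (t * x) / t / f x
        rw [hfe]
      · exact absurd ⟨ht, hfe⟩ h
    · filter_upwards [hmem] with x hx
      refine (ae_restrict_iff' measurableSet_Ioo).2 (Filter.Eventually.of_forall fun t ht => ?_)
      have ht0 : 0 < t := ht.1
      have htxδ : t * x ∈ Set.Ioo (0:ℝ) δ :=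
        ⟨mul_pos ht0 hx.1, by have h2 := mul_lt_mul_of_pos_right ht.2 hx.1; rw [one_mul] at h2; linarith [hx.2, hx₀δ]⟩
      have h1 : f (t * x) / f x ≤ C * t ^ (ρ/2) := hpot x hx t ht0 ht.2.le
      have hfx : 0 < f x := hpos x ⟨hx.1, lt_trans hx.2 hx₀δ⟩
      have hftx : 0 < f (t * x) := hpos _ htxδ
      rw [Real.norm_eq_abs, abs_of_pos (by positivity)]
      have e : f (t * x) / t / f x = (f (t * x) / f x) / t := by ring
      rw [e, Real.rpow_sub_one ht0.ne', ← mul_div_assoc]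
      gcongr
    · exact ((intervalIntegral.integrableOn_Ioo_rpow_iff zero_lt_one).2 (by linarith)).const_mul C
    · refine (ae_restrict_iff' measurableSet_Ioo).2 (Filter.Eventually.of_forall fun t ht => ?_)
      have ht0 : 0 < t := ht.1
      have e : ∀ x : ℝ, f (t * x) / f x / t = f (t * x) / t / f x := fun x => by ring
      rw [Real.rpow_sub_one ht0.ne']
      exact Tendsto.congr e ((hrv t ht0).div_const t)
  have hlimint : (∫ t in Set.Ioo (0:ℝ) 1, t ^ (ρ - 1)) = 1/ρ := by
    rw [← integral_Ioc_eq_integral_Ioo, ← intervalIntegral.integral_of_le zero_le_one,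
      integral_rpow (Or.inl (by linarith : (-1:ℝ) < ρ - 1))]
    have hρ1 : ρ - 1 + 1 = ρ := by ring
    rw [hρ1, Real.one_rpow, Real.zero_rpow hρ.ne']
    ring
  rw [hlimint] at hDCT
  exact Tendsto.congr' heq.symm hDCT
end

section
/- Suppose $v(x) = \sigma^2 + \int_{|y|<x}y^2\,\Pi(dy)$ is slowly varying at $0$ (index $0$) and positive for small $x$. Then $x^2\,\overline\Pi(x)/v(x) \to 0$ as $x \downarrow 0$, where $\overline\Pi(x) = \Pi(\mathbb{R}\setminus[-x,x])$. -/
/-!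
Let `T(x) = Π{|y| ≥ x}` and `G(x) = x² T(x) / v(x)`, which dominates the ratio in question.
Since `y² ≥ x²` on the annulus `x ≤ |y| < 2x`, splitting `T(x)` at `2x` gives
`x² T(x) ≤ v(2x) - v(x) + (2x)² T(2x) / 4`, i.e. `G(x) ≤ (r - 1) + r G(2x) / 4` with
`r = v(2x) / v(x) → 1`. Hence for every `η > 0` eventually `G(x) ≤ η + G(2x) / 2`, and iterating
along `x, 2x, 4x, …` up to a fixed scale `ε`, where `G` is bounded by some `M`, gives
`G(x) ≤ 2η + M x / ε`. This dyadic iteration replaces Karamata's theorem.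
-/

open MeasureTheory Filter Topology Set

theorem le_two_mul_add_of_le_add_half {g : ℝ → ℝ} {η M ε : ℝ} (hη : 0 ≤ η) (hM : 0 ≤ M)
    (hε : 0 < ε) (hrec : ∀ x ∈ Ioc 0 ε, g x ≤ η + g (2 * x) / 2)
    (hbdd : ∀ x ∈ Ioc ε (2 * ε), g x ≤ M) :
    ∀ x ∈ Ioc 0 (2 * ε), g x ≤ 2 * η + M / ε * x := by
  have base : ∀ x ∈ Ioc ε (2 * ε), g x ≤ 2 * η + M / ε * x := fun x hx => by
    have : M ≤ M / ε * x := by rw [div_mul_eq_mul_div, le_div_iff₀ hε]; nlinarith [hx.1]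
    linarith [hbdd x hx]
  have key : ∀ n : ℕ, ∀ x ∈ Ioc 0 (2 * ε), ε < 2 ^ n * x → g x ≤ 2 * η + M / ε * x := by
    intro n
    induction n with
    | zero => exact fun x hx hn => base x ⟨by simpa using hn, hx.2⟩
    | succ n ih =>
      intro x hx hn
      rcases lt_or_ge ε x with hεx | hxε
      · exact base x ⟨hεx, hx.2⟩
      have h2x := ih (2 * x) ⟨by linarith [hx.1], by linarith⟩ (by rwa [pow_succ, mul_assoc] at hn)
      linarith [hrec x ⟨hx.1, hxε⟩]
  intro x hx
  obtain ⟨n, hn⟩ := pow_unbounded_of_one_lt (ε / x) one_lt_two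
  exact key n x hx (by rwa [div_lt_iff₀ hx.1] at hn)

theorem tendsto_zero_of_le_add_half {g : ℝ → ℝ} (hg : ∀ᶠ x in 𝓝[>] 0, 0 ≤ g x)
    (hrec : ∀ η > 0, ∀ᶠ x in 𝓝[>] 0, g x ≤ η + g (2 * x) / 2)
    (hbdd : ∀ᶠ ε in 𝓝[>] 0, ∃ M, ∀ x ∈ Ioc ε (2 * ε), g x ≤ M) :
    Tendsto g (𝓝[>] 0) (𝓝 0) := by
  refine tendsto_order.2 ⟨fun a ha => hg.mono fun x hx => ha.trans_le hx, fun b hb => ?_⟩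
  obtain ⟨ε, hε, hεrec⟩ :=
    mem_nhdsGT_iff_exists_Ioc_subset.1 ((hrec (b / 4) (by positivity)).and hbdd)
  replace hε : 0 < ε := hε
  obtain ⟨M, hM⟩ := (hεrec ⟨hε, le_rfl⟩).2
  have hle := le_two_mul_add_of_le_add_half (M := max M 0) (by positivity) (le_max_right _ _) hε
    (fun x hx => (hεrec hx).1) fun x hx => (hM x hx).trans (le_max_left _ _)
  have hlin : Tendsto (fun x => max M 0 / ε * x) (𝓝[>] 0) (𝓝 0) := by
    simpa using ((continuous_const_mul (max M 0 / ε)).tendsto 0).mono_left nhdsWithin_le_nhds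
  filter_upwards [Ioc_mem_nhdsGT (by positivity : (0:ℝ) < 2 * ε),
    hlin.eventually (gt_mem_nhds (half_pos hb))] with x hx hsmall
  linarith [hle x hx]

section LevyMeasure

variable {μ : Measure ℝ}

theorem integrable_min_sq_one (hlevy : ∫⁻ y, ENNReal.ofReal (min (y ^ 2) 1) ∂μ ≠ ⊤) :
    Integrable (fun y : ℝ => min (y ^ 2) 1) μ :=
  ⟨by fun_prop, by
    rwa [hasFiniteIntegral_iff_ofReal (ae_of_all _ fun y => by positivity), lt_top_iff_ne_top]⟩

theorem integrableOn_sq_abs_lt (hlevy : ∫⁻ y, ENNReal.ofReal (min (y ^ 2) 1) ∂μ ≠ ⊤) (b : ℝ) :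
    IntegrableOn (fun y : ℝ => y ^ 2) {y | |y| < b} μ := by
  refine ((integrable_min_sq_one hlevy).const_mul (max (b ^ 2) 1)).integrableOn.mono'
    (by fun_prop) (ae_restrict_of_forall_mem
      (measurableSet_lt measurable_abs measurable_const) fun y hy => ?_)
  have hyb : y ^ 2 ≤ b ^ 2 := by
    rw [← sq_abs y]; exact pow_le_pow_left₀ (abs_nonneg y) (le_of_lt hy) 2
  rw [Real.norm_eq_abs, abs_of_nonneg (sq_nonneg y)]
  rcases le_total (y ^ 2) 1 with h | h
  · rw [min_eq_left h]; nlinarith [le_max_right (b ^ 2) 1, sq_nonneg y]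
  · rw [min_eq_right h, mul_one]; exact hyb.trans (le_max_left _ _)

theorem measure_le_abs_ne_top (hlevy : ∫⁻ y, ENNReal.ofReal (min (y ^ 2) 1) ∂μ ≠ ⊤)
    {a : ℝ} (ha : 0 < a) : μ {y | a ≤ |y|} ≠ ⊤ := by
  have hε : ENNReal.ofReal (min (a ^ 2) 1) ≠ 0 := by
    rw [ne_eq, ENNReal.ofReal_eq_zero, not_le]; positivity
  refine ne_top_of_le_ne_top (ENNReal.div_lt_top hlevy hε).ne ((measure_mono fun y hy => ?_).trans
    (meas_ge_le_lintegral_div (by fun_prop) hε ENNReal.ofReal_ne_top))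
  have : a ^ 2 ≤ y ^ 2 := by rw [← sq_abs y]; exact pow_le_pow_left₀ ha.le hy 2
  exact ENNReal.ofReal_le_ofReal (min_le_min_right 1 this)

theorem measure_le_abs_eq_add {a b : ℝ} (hab : a ≤ b) :
    μ {y | a ≤ |y|} = μ {y | a ≤ |y| ∧ |y| < b} + μ {y | b ≤ |y|} := by
  rw [← measure_inter_add_sdiff {y | a ≤ |y|} (measurableSet_lt measurable_abs measurable_const)]
  congr 2
  ext y
  simp only [Set.mem_sdiff, mem_ofPred_eq, not_lt]
  exact ⟨fun h => h.2, fun h => ⟨hab.trans h, h⟩⟩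

theorem measurableSet_annulus (a b : ℝ) : MeasurableSet {y : ℝ | a ≤ |y| ∧ |y| < b} := by
  measurability

variable {v : ℝ → ℝ} {c : ℝ}

theorem sub_eq_setIntegral_annulus (hlevy : ∫⁻ y, ENNReal.ofReal (min (y ^ 2) 1) ∂μ ≠ ⊤)
    (hv : ∀ x, v x = c + ∫ y in {y | |y| < x}, y ^ 2 ∂μ) {a b : ℝ} (hab : a ≤ b) :
    v b - v a = ∫ y in {y | a ≤ |y| ∧ |y| < b}, y ^ 2 ∂μ := by
  have hann : {y : ℝ | a ≤ |y| ∧ |y| < b} = {y | |y| < b} \ {y | |y| < a} := by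
    ext y
    simp only [Set.mem_sdiff, mem_ofPred_eq, not_lt, and_comm]
  rw [hann, setIntegral_sdiff (measurableSet_lt measurable_abs measurable_const)
    (integrableOn_sq_abs_lt hlevy b) fun y hy => lt_of_lt_of_le hy hab, hv, hv]
  ring

theorem monotone_of_eq_add_setIntegral_sq
    (hlevy : ∫⁻ y, ENNReal.ofReal (min (y ^ 2) 1) ∂μ ≠ ⊤)
    (hv : ∀ x, v x = c + ∫ y in {y | |y| < x}, y ^ 2 ∂μ) : Monotone v := fun a b hab => by
  have := sub_eq_setIntegral_annulus hlevy hv hab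
  linarith [setIntegral_nonneg (μ := μ) (measurableSet_annulus a b) fun y _ => sq_nonneg y]

theorem sq_mul_measure_annulus_le (hlevy : ∫⁻ y, ENNReal.ofReal (min (y ^ 2) 1) ∂μ ≠ ⊤)
    (hv : ∀ x, v x = c + ∫ y in {y | |y| < x}, y ^ 2 ∂μ) {a b : ℝ} (ha : 0 ≤ a) (hab : a ≤ b) :
    a ^ 2 * (μ {y | a ≤ |y| ∧ |y| < b}).toReal ≤ v b - v a := by
  rw [sub_eq_setIntegral_annulus hlevy hv hab, ← measureReal_def, mul_comm, ← smul_eq_mul,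
    ← setIntegral_const]
  refine integral_mono_of_nonneg (ae_of_all _ fun _ => sq_nonneg a)
    ((integrableOn_sq_abs_lt hlevy b).mono_set fun y hy => hy.2) ?_
  refine ae_restrict_of_forall_mem (measurableSet_annulus a b) fun y hy => ?_
  show a ^ 2 ≤ y ^ 2
  rw [← sq_abs y]
  exact pow_le_pow_left₀ ha hy.1 2

theorem sq_mul_tail_le (hlevy : ∫⁻ y, ENNReal.ofReal (min (y ^ 2) 1) ∂μ ≠ ⊤)
    (hv : ∀ x, v x = c + ∫ y in {y | |y| < x}, y ^ 2 ∂μ) {a b : ℝ} (ha : 0 < a) (hab : a ≤ b) :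
    a ^ 2 * (μ {y | a ≤ |y|}).toReal ≤ v b - v a + a ^ 2 * (μ {y | b ≤ |y|}).toReal := by
  have hann : μ {y | a ≤ |y| ∧ |y| < b} ≤ μ {y | a ≤ |y|} := measure_mono fun y hy => hy.1
  rw [measure_le_abs_eq_add hab, ENNReal.toReal_add
    (ne_top_of_le_ne_top (measure_le_abs_ne_top hlevy ha) hann)
    (measure_le_abs_ne_top hlevy (ha.trans_le hab)), mul_add]
  linarith [sq_mul_measure_annulus_le (μ := μ) hlevy hv ha.le hab]

noncomputable def tailRatio (μ : Measure ℝ) (v : ℝ → ℝ) (x : ℝ) : ℝ :=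
  x ^ 2 * (μ {y | x ≤ |y|}).toReal / v x

theorem tailRatio_nonneg {x : ℝ} (hvx : 0 ≤ v x) : 0 ≤ tailRatio μ v x := by
  unfold tailRatio; positivity

theorem tailRatio_le_div_sub_one_add (hlevy : ∫⁻ y, ENNReal.ofReal (min (y ^ 2) 1) ∂μ ≠ ⊤)
    (hv : ∀ x, v x = c + ∫ y in {y | |y| < x}, y ^ 2 ∂μ) {x : ℝ} (hx : 0 < x) (hvx : 0 < v x) :
    tailRatio μ v x ≤ (v (2 * x) / v x - 1) + v (2 * x) / v x * tailRatio μ v (2 * x) / 4 := by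
  have hv2x : 0 < v (2 * x) :=
    hvx.trans_le (monotone_of_eq_add_setIntegral_sq hlevy hv (by linarith))
  have key := sq_mul_tail_le hlevy hv hx (by linarith : x ≤ 2 * x)
  have hrhs : (v (2 * x) / v x - 1 + v (2 * x) / v x * tailRatio μ v (2 * x) / 4) * v x =
      v (2 * x) - v x + x ^ 2 * (μ {y | 2 * x ≤ |y|}).toReal := by
    unfold tailRatio; field_simp; ring
  rw [tailRatio, div_le_iff₀ hvx, hrhs]
  exact key

theorem eventually_tailRatio_le_add_half (hlevy : ∫⁻ y, ENNReal.ofReal (min (y ^ 2) 1) ∂μ ≠ ⊤)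
    (hv : ∀ x, v x = c + ∫ y in {y | |y| < x}, y ^ 2 ∂μ) (hpos : ∀ᶠ x in 𝓝[>] 0, 0 < v x)
    (hdouble : Tendsto (fun x => v (2 * x) / v x) (𝓝[>] 0) (𝓝 1)) {η : ℝ} (hη : 0 < η) :
    ∀ᶠ x in 𝓝[>] 0, tailRatio μ v x ≤ η + tailRatio μ v (2 * x) / 2 := by
  filter_upwards [self_mem_nhdsWithin, hpos,
    hdouble.eventually (gt_mem_nhds (by simp [hη] : (1 : ℝ) < 1 + min η 1))] with x hx hvx hr
  have hG2 : 0 ≤ tailRatio μ v (2 * x) := tailRatio_nonneg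
    (hvx.le.trans (monotone_of_eq_add_setIntegral_sq hlevy hv (by linarith [mem_Ioi.1 hx])))
  have hrη : v (2 * x) / v x - 1 ≤ η := by linarith [min_le_left η 1]
  have hr2 : v (2 * x) / v x ≤ 2 := by linarith [min_le_right η 1]
  have := tailRatio_le_div_sub_one_add hlevy hv hx hvx
  nlinarith

theorem tailRatio_le_of_mem_Ioc (hlevy : ∫⁻ y, ENNReal.ofReal (min (y ^ 2) 1) ∂μ ≠ ⊤)
    (hv : ∀ x, v x = c + ∫ y in {y | |y| < x}, y ^ 2 ∂μ) {ε : ℝ} (hε : 0 < ε) (hvε : 0 < v ε) :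
    ∀ x ∈ Ioc ε (2 * ε), tailRatio μ v x ≤ (2 * ε) ^ 2 * (μ {y | ε ≤ |y|}).toReal / v ε := by
  intro x hx
  have hvx : v ε ≤ v x := monotone_of_eq_add_setIntegral_sq hlevy hv hx.1.le
  unfold tailRatio
  gcongr
  · linarith [hx.1]
  · exact hx.2
  · exact measure_le_abs_ne_top hlevy hε
  · exact hx.1.le

end LevyMeasure

theorem tail_negligible_of_slowly_varying_variance_general (Pi0 : Measure ℝ) (σ : ℝ)
    (hlevy : ∫⁻ x, ENNReal.ofReal (min (x ^ 2) 1) ∂Pi0 ≠ ⊤)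
    (v : ℝ → ℝ)
    (hv : ∀ x, v x = σ ^ 2 + ∫ y in {y : ℝ | |y| < x}, y ^ 2 ∂Pi0)
    (hpos : ∀ᶠ x in 𝓝[>] (0:ℝ), 0 < v x)
    (hsv : ∀ l > (0:ℝ), Tendsto (fun x => v (l * x) / v x) (𝓝[>] (0:ℝ)) (𝓝 1)) :
    Tendsto (fun x => x ^ 2 * (Pi0 {y | x < |y|}).toReal / v x)
      (𝓝[>] (0:ℝ)) (𝓝 0) := by
  have hG : Tendsto (tailRatio Pi0 v) (𝓝[>] 0) (𝓝 0) := by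
    refine tendsto_zero_of_le_add_half (hpos.mono fun x hx => tailRatio_nonneg hx.le)
      (fun η hη => eventually_tailRatio_le_add_half hlevy hv hpos (hsv 2 two_pos) hη) ?_
    filter_upwards [self_mem_nhdsWithin, hpos] with ε hε hvε
    exact ⟨_, tailRatio_le_of_mem_Ioc hlevy hv hε hvε⟩
  refine tendsto_of_tendsto_of_tendsto_of_le_of_le' tendsto_const_nhds hG ?_ ?_
  · filter_upwards [hpos] with x hvx
    positivity
  · filter_upwards [self_mem_nhdsWithin, hpos] with x hx hvx
    unfold tailRatio
    gcongr
    · exact measure_le_abs_ne_top hlevy hx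
    · exact le_of_lt

/-- If the truncated variance `v x = σ² + ∫_{|y|<x} y² dΠ` is slowly varying at
`0` (and positive for small `x`), then `x² Π̄(x) / v(x) → 0` as `x ↓ 0`. -/
theorem tail_negligible_of_slowly_varying_variance (Pi0 : Measure ℝ) (σ : ℝ)
    (hσ : 0 ≤ σ) (hPi0 : Pi0 {0} = 0)
    (hlevy : ∫⁻ x, ENNReal.ofReal (min (x ^ 2) 1) ∂Pi0 ≠ ⊤)
    (v : ℝ → ℝ)
    (hv : ∀ x, v x = σ ^ 2 + ∫ y in {y : ℝ | |y| < x}, y ^ 2 ∂Pi0)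
    (hpos : ∀ᶠ x in 𝓝[>] (0:ℝ), 0 < v x)
    (hsv : ∀ l > (0:ℝ), Tendsto (fun x => v (l * x) / v x) (𝓝[>] (0:ℝ)) (𝓝 1)) :
    Tendsto (fun x => x ^ 2 * (Pi0 {y | x < |y|}).toReal / v x)
      (𝓝[>] (0:ℝ)) (𝓝 0) :=
  tail_negligible_of_slowly_varying_variance_general Pi0 σ hlevy v hv hpos hsv
end

section
/- Let $\Pi$ be a Lévy measure, $m(x) = \gamma - \int_{x \le |y|<1} y\,\Pi(dy)$, and $\overline\Pi(x) = \Pi(\mathbb{R}\setminus[-x,x])$. Assume $x\,\overline\Pi(x)/m(x) \to 0$ as $x \downarrow 0$ and $m(x) > 0$ for all small $x$. Then $m$ is slowly varying at $0$: $m(\lambda x)/m(x) \to 1$ as $x \downarrow 0$ for all $\lambda > 0$. -/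
open MeasureTheory Filter Topology Set

/-!
For `1 ≤ l`, `m (l x) - m x` is the integral of `y` over `x ≤ |y| < l x`, so its absolute value is
at most `l · x Π{|y| ≥ x}`, which is `o(m x)`; the case `l < 1` follows by inverting the ratio at
`l x`. The hypothesis only controls the open tail `x Π{|y| > x}`. Since `Π{|y| ≥ x}` is the limit
of `Π{|y| > s}` as `s ↑ x` and `m` is left-continuous, the bound `s Π{|y| > s} ≤ ε m s` for all
small `s < x` passes to `x Π{|y| ≥ x} ≤ ε m x`.
-/

noncomputable def truncatedMean (μ : Measure ℝ) (γ x : ℝ) : ℝ :=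
  γ - ∫ y in abs ⁻¹' Ico x 1, y ∂μ

section

variable {μ : Measure ℝ}

lemma measure_abs_preimage_Ici_ne_top
    (hμ : ∫⁻ y, ENNReal.ofReal (min (y ^ 2) 1) ∂μ ≠ ⊤) {t : ℝ} (ht : 0 < t) :
    μ (abs ⁻¹' Ici t) ≠ ⊤ := by
  have hc : ENNReal.ofReal (min (t ^ 2) 1) ≠ 0 :=
    (ENNReal.ofReal_pos.2 (lt_min (pow_pos ht 2) one_pos)).ne'
  have hsub : abs ⁻¹' Ici t ⊆
      {y | ENNReal.ofReal (min (t ^ 2) 1) ≤ ENNReal.ofReal (min (y ^ 2) 1)} :=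
    fun y (hy : t ≤ |y|) => ENNReal.ofReal_le_ofReal <| min_le_min_right 1 <| by
      simpa only [sq_abs] using pow_le_pow_left₀ ht.le hy 2
  refine ne_top_of_le_ne_top (ENNReal.div_ne_top hμ hc) ((measure_mono hsub).trans ?_)
  exact meas_ge_le_lintegral_div (by fun_prop) hc ENNReal.ofReal_ne_top

lemma integrableOn_abs_preimage_Ico {a : ℝ} (ha : μ (abs ⁻¹' Ici a) ≠ ⊤) (b : ℝ) :
    IntegrableOn (fun y => y) (abs ⁻¹' Ico a b) μ :=
  Measure.integrableOn_of_bounded (M := b)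
    (ne_top_of_le_ne_top ha (measure_mono (preimage_mono Ico_subset_Ici_self)))
    aestronglyMeasurable_id <|
    (ae_restrict_iff' (measurableSet_Ico.preimage measurable_abs)).2 <|
      Eventually.of_forall fun _ hy => hy.2.le

lemma truncatedMean_sub_truncatedMean (γ : ℝ) {a b : ℝ} (hab : a ≤ b) (hb : b ≤ 1)
    (ha : μ (abs ⁻¹' Ici a) ≠ ⊤) :
    truncatedMean μ γ b - truncatedMean μ γ a = ∫ y in abs ⁻¹' Ico a b, y ∂μ := by
  have hb' : μ (abs ⁻¹' Ici b) ≠ ⊤ :=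
    ne_top_of_le_ne_top ha (measure_mono (preimage_mono (Ici_subset_Ici.2 hab)))
  rw [truncatedMean, truncatedMean, ← Ico_union_Ico_eq_Ico hab hb, preimage_union,
    setIntegral_union ((Ico_disjoint_Ico_same).preimage _)
      (measurableSet_Ico.preimage measurable_abs) (integrableOn_abs_preimage_Ico ha b)
      (integrableOn_abs_preimage_Ico hb' 1)]
  ring

lemma abs_truncatedMean_sub_le (γ : ℝ) {a b : ℝ} (hab : a ≤ b) (hb : b ≤ 1)
    (ha : μ (abs ⁻¹' Ici a) ≠ ⊤) :
    |truncatedMean μ γ b - truncatedMean μ γ a| ≤ b * μ.real (abs ⁻¹' Ico a b) := by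
  rw [truncatedMean_sub_truncatedMean γ hab hb ha]
  exact norm_setIntegral_le_of_norm_le_const
    (lt_of_le_of_lt (measure_mono (preimage_mono Ico_subset_Ici_self)) ha.lt_top)
    fun y hy => (Real.norm_eq_abs y).trans_le hy.2.le

lemma tendsto_measure_abs_preimage_Ico_sub {a x : ℝ} (hax : a < x)
    (ha : μ (abs ⁻¹' Ici a) ≠ ⊤) :
    Tendsto (fun δ => μ (abs ⁻¹' Ico (x - δ) x)) (𝓝[>] 0) (𝓝 0) := by
  have hempty : ⋂ δ > (0 : ℝ), abs ⁻¹' Ico (x - δ) x = ∅ := by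
    refine eq_empty_of_forall_notMem fun y hy => ?_
    have hyx : |y| < x := (mem_iInter₂.1 hy 1 one_pos).2
    have := (mem_iInter₂.1 hy ((x - |y|) / 2) (by linarith)).1
    linarith
  rw [← measure_empty (μ := μ), ← hempty]
  refine tendsto_measure_biInter_gt
    (fun _ _ => (measurableSet_Ico.preimage measurable_abs).nullMeasurableSet)
    (fun δ δ' _ hδ => preimage_mono (Ico_subset_Ico_left (by linarith))) ⟨x - a, sub_pos.2 hax, ?_⟩
  exact ne_top_of_le_ne_top ha (measure_mono (preimage_mono (by simpa using Ico_subset_Ici_self)))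

lemma tendsto_truncatedMean_sub_nhdsGT (γ : ℝ) {a x : ℝ} (hax : a < x) (hx : x ≤ 1)
    (ha : μ (abs ⁻¹' Ici a) ≠ ⊤) :
    Tendsto (fun δ => truncatedMean μ γ (x - δ)) (𝓝[>] 0) (𝓝 (truncatedMean μ γ x)) := by
  have hshell : Tendsto (fun δ => x * μ.real (abs ⁻¹' Ico (x - δ) x)) (𝓝[>] 0) (𝓝 0) := by
    simpa [measureReal_def] using ((ENNReal.tendsto_toReal ENNReal.zero_ne_top).comp
      (tendsto_measure_abs_preimage_Ico_sub hax ha)).const_mul x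
  refine tendsto_iff_norm_sub_tendsto_zero.2
    (squeeze_zero' (Eventually.of_forall fun _ => norm_nonneg _) ?_ hshell)
  filter_upwards [Ioo_mem_nhdsGT (sub_pos.2 hax)] with δ hδ
  rw [Real.norm_eq_abs, abs_sub_comm]
  exact abs_truncatedMean_sub_le γ (by linarith [hδ.1]) hx
    (ne_top_of_le_ne_top ha (measure_mono (preimage_mono (Ici_subset_Ici.2 (by linarith [hδ.2])))))

lemma mul_measureReal_abs_ge_le (γ ε : ℝ) {x : ℝ} (hx : 0 < x) (hx1 : x ≤ 1)
    (hfin : ∀ t > 0, μ (abs ⁻¹' Ici t) ≠ ⊤)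
    (h : ∀ s ∈ Ioo 0 x, s * μ.real (abs ⁻¹' Ioi s) ≤ ε * truncatedMean μ γ s) :
    x * μ.real (abs ⁻¹' Ici x) ≤ ε * truncatedMean μ γ x := by
  have hlim : Tendsto (fun δ => x / (x - δ) * (ε * truncatedMean μ γ (x - δ))) (𝓝[>] 0)
      (𝓝 (x / (x - 0) * (ε * truncatedMean μ γ x))) := by
    refine Tendsto.mul ?_ ((tendsto_truncatedMean_sub_nhdsGT γ (half_lt_self hx) hx1
      (hfin _ (half_pos hx))).const_mul ε)
    exact (tendsto_const_nhds.div (tendsto_const_nhds.sub tendsto_id)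
      (by simpa using hx.ne')).mono_left nhdsWithin_le_nhds
  rw [sub_zero, div_self hx.ne', one_mul] at hlim
  refine ge_of_tendsto hlim ?_
  filter_upwards [Ioo_mem_nhdsGT hx] with δ hδ
  have hs : x - δ ∈ Ioo 0 x := ⟨by linarith [hδ.2], by linarith [hδ.1]⟩
  have hfin' : μ (abs ⁻¹' Ioi (x - δ)) ≠ ⊤ :=
    ne_top_of_le_ne_top (hfin _ hs.1) (measure_mono (preimage_mono Ioi_subset_Ici_self))
  calc x * μ.real (abs ⁻¹' Ici x) ≤ x * μ.real (abs ⁻¹' Ioi (x - δ)) :=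
        mul_le_mul_of_nonneg_left
          (measureReal_mono (preimage_mono (Ici_subset_Ioi.2 hs.2)) hfin') hx.le
    _ = x / (x - δ) * ((x - δ) * μ.real (abs ⁻¹' Ioi (x - δ))) := by
        rw [← mul_assoc, div_mul_cancel₀ x hs.1.ne']
    _ ≤ x / (x - δ) * (ε * truncatedMean μ γ (x - δ)) :=
        mul_le_mul_of_nonneg_left (h _ hs) (div_nonneg hx.le hs.1.le)

lemma tendsto_mul_measureReal_abs_ge_div (γ : ℝ) (hfin : ∀ t > 0, μ (abs ⁻¹' Ici t) ≠ ⊤)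
    (hpos : ∀ᶠ x in 𝓝[>] 0, 0 < truncatedMean μ γ x)
    (hopen : Tendsto (fun x => x * μ.real (abs ⁻¹' Ioi x) / truncatedMean μ γ x) (𝓝[>] 0)
      (𝓝 0)) :
    Tendsto (fun x => x * μ.real (abs ⁻¹' Ici x) / truncatedMean μ γ x) (𝓝[>] 0) (𝓝 0) := by
  refine tendsto_order.2 ⟨fun a ha => ?_, fun ε hε => ?_⟩
  · filter_upwards [hpos, self_mem_nhdsWithin] with x hm (hx : 0 < x)
    exact ha.trans_le (by positivity)
  obtain ⟨δ, hδ, hsub⟩ := mem_nhdsGT_iff_exists_Ioo_subset.1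
    ((hopen.eventually_lt_const (half_pos hε)).and hpos)
  filter_upwards [Ioo_mem_nhdsGT (lt_min hδ one_pos)] with x hx
  have hxδ : x < δ := hx.2.trans_le (min_le_left _ _)
  have hmx : 0 < truncatedMean μ γ x := (hsub ⟨hx.1, hxδ⟩).2
  rw [div_lt_iff₀ hmx]
  refine (mul_measureReal_abs_ge_le γ (ε / 2) hx.1 (hx.2.le.trans (min_le_right _ _)) hfin
    fun s hs => ?_).trans_lt (by linarith [mul_pos hε hmx])
  obtain ⟨hlt, hms⟩ := hsub ⟨hs.1, hs.2.trans hxδ⟩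
  exact ((div_lt_iff₀ hms).1 hlt).le

lemma tendsto_truncatedMean_mul_div_of_one_le (γ : ℝ) (hfin : ∀ t > 0, μ (abs ⁻¹' Ici t) ≠ ⊤)
    (hpos : ∀ᶠ x in 𝓝[>] 0, 0 < truncatedMean μ γ x)
    (hclosed : Tendsto (fun x => x * μ.real (abs ⁻¹' Ici x) / truncatedMean μ γ x) (𝓝[>] 0)
      (𝓝 0)) {l : ℝ} (hl : 1 ≤ l) :
    Tendsto (fun x => truncatedMean μ γ (l * x) / truncatedMean μ γ x) (𝓝[>] 0) (𝓝 1) := by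
  rw [tendsto_iff_norm_sub_tendsto_zero]
  refine squeeze_zero' (Eventually.of_forall fun _ => norm_nonneg _) ?_
    (by simpa using hclosed.const_mul l)
  filter_upwards [hpos, Ioo_mem_nhdsGT (one_div_pos.2 (zero_lt_one.trans_le hl))]
    with x hm hx
  have hlx : l * x ≤ 1 := by
    have := hx.2.le
    rwa [le_div_iff₀ (zero_lt_one.trans_le hl), mul_comm] at this
  rw [Real.norm_eq_abs, div_sub_one hm.ne', abs_div, abs_of_pos hm, ← mul_div_assoc,
    div_le_div_iff_of_pos_right hm]
  calc |truncatedMean μ γ (l * x) - truncatedMean μ γ x|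
      ≤ l * x * μ.real (abs ⁻¹' Ico x (l * x)) :=
        abs_truncatedMean_sub_le γ (le_mul_of_one_le_left hx.1.le hl) hlx (hfin x hx.1)
    _ ≤ l * (x * μ.real (abs ⁻¹' Ici x)) := by
        rw [mul_assoc]
        gcongr
        exacts [hx.1.le, hfin x hx.1, Ico_subset_Ici_self]

end

lemma tendsto_comp_mul_div_nhdsGT_of_one_le {f : ℝ → ℝ}
    (h : ∀ l ≥ 1, Tendsto (fun x => f (l * x) / f x) (𝓝[>] 0) (𝓝 1)) {l : ℝ} (hl : 0 < l) :
    Tendsto (fun x => f (l * x) / f x) (𝓝[>] 0) (𝓝 1) := by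
  rcases le_or_gt 1 l with hl1 | hl1
  · exact h l hl1
  have hmul : Tendsto (l * ·) (𝓝[>] 0) (𝓝[>] 0) :=
    tendsto_comap.mono_left (comap_mulLeft_nhdsGT_zero hl).ge
  have := ((h l⁻¹ ((one_le_inv₀ hl).2 hl1.le)).comp hmul).inv₀ one_ne_zero
  simpa [Function.comp_def, inv_mul_cancel_left₀ hl.ne', inv_div] using this

theorem truncated_mean_slowly_varying_general (Pi0 : Measure ℝ) (γ : ℝ)
    (hlevy : ∫⁻ x, ENNReal.ofReal (min (x ^ 2) 1) ∂Pi0 ≠ ⊤)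
    (m : ℝ → ℝ)
    (hm : ∀ x, m x = γ - ∫ y in {y : ℝ | x ≤ |y| ∧ |y| < 1}, y ∂Pi0)
    (hpos : ∀ᶠ x in 𝓝[>] (0:ℝ), 0 < m x)
    (hneg : Tendsto (fun x => x * (Pi0 {y | x < |y|}).toReal / m x)
      (𝓝[>] (0:ℝ)) (𝓝 0)) :
    ∀ l > (0:ℝ), Tendsto (fun x => m (l * x) / m x) (𝓝[>] (0:ℝ)) (𝓝 1) := by
  obtain rfl : m = truncatedMean Pi0 γ := funext hm
  have hfin : ∀ t > 0, Pi0 (abs ⁻¹' Ici t) ≠ ⊤ :=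
    fun _ => measure_abs_preimage_Ici_ne_top hlevy
  have hclosed := tendsto_mul_measureReal_abs_ge_div γ hfin hpos hneg
  exact fun l hl => tendsto_comp_mul_div_nhdsGT_of_one_le
    (fun _ hl1 => tendsto_truncatedMean_mul_div_of_one_le γ hfin hpos hclosed hl1) hl

/-- If the truncated mean `m x = γ - ∫_{x ≤ |y| < 1} y dΠ` is positive for small
`x` and `x Π̄(x)/m(x) → 0` as `x ↓ 0`, then `m` is slowly varying at `0`. -/
theorem truncated_mean_slowly_varying (Pi0 : Measure ℝ) (γ : ℝ)
    (hPi0 : Pi0 {0} = 0)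
    (hlevy : ∫⁻ x, ENNReal.ofReal (min (x ^ 2) 1) ∂Pi0 ≠ ⊤)
    (m : ℝ → ℝ)
    (hm : ∀ x, m x = γ - ∫ y in {y : ℝ | x ≤ |y| ∧ |y| < 1}, y ∂Pi0)
    (hpos : ∀ᶠ x in 𝓝[>] (0:ℝ), 0 < m x)
    (hneg : Tendsto (fun x => x * (Pi0 {y | x < |y|}).toReal / m x)
      (𝓝[>] (0:ℝ)) (𝓝 0)) :
    ∀ l > (0:ℝ), Tendsto (fun x => m (l * x) / m x) (𝓝[>] (0:ℝ)) (𝓝 1) :=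
  truncated_mean_slowly_varying_general Pi0 γ hlevy m hm hpos hneg
end

section
/- Let $\tau$ be a real random variable whose distribution has a Lebesgue density on $\mathbb{R}$. Then as $\varepsilon \downarrow 0$, the fractional part $\{\tau/\varepsilon\}$ converges in distribution to a uniform random variable on $(0,1)$. -/
/-!
Write the law of `τ` as `g x dx` and put `h := f ∘ Int.fract`, a bounded `1`-periodic function.
Translating `x` by `ε v` turns `h (x / ε)` into `h (x / ε + v)`, so `∫ g x • h (x / ε)` differs
from `∫ g x • h (x / ε + v)` by at most `sup ‖h‖ * ‖g (· + ε v) - g‖₁`. Averaging over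
`v ∈ (0, 1]` and exchanging the integrals (Fubini), the average of the latter is
`(∫ g) • ∫₀¹ h`, while the error tends to `0` with `ε` by continuity of translation in `L¹`.
-/

open MeasureTheory Filter Topology

theorem tendsto_integral_norm_comp_add_sub {G E : Type*} [NormedAddCommGroup E]
    [AddGroup G] [TopologicalSpace G] [IsTopologicalAddGroup G] [MeasurableSpace G]
    [BorelSpace G] {μ : Measure G} [μ.IsAddRightInvariant] [IsLocallyFiniteMeasure μ]
    [μ.InnerRegularCompactLTTop] {g : G → E} (hg : Integrable g μ) :
    Tendsto (fun t => ∫ x, ‖g (x + t) - g x‖ ∂μ) (𝓝 0) (𝓝 0) := by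
  let shift : C(G, C(G, G)) :=
    (ContinuousMap.mk (fun p : G × G => p.2 + p.1) (continuous_snd.add continuous_fst)).curry
  have hshift (t : G) : MeasurePreserving (shift t) μ μ := measurePreserving_add_right μ t
  have hL1 (t : G) : ∫ x, ‖g (x + t) - g x‖ ∂μ
      = ‖Lp.compMeasurePreserving (shift t) (hshift t) (hg.toL1 g) - hg.toL1 g‖ := by
    rw [L1.norm_eq_integral_norm]
    refine integral_congr_ae ?_
    filter_upwards [Lp.coeFn_sub (Lp.compMeasurePreserving _ (hshift t) (hg.toL1 g)) _,
      Lp.coeFn_compMeasurePreserving (hg.toL1 g) (hshift t), hg.coeFn_toL1,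
      (hshift t).quasiMeasurePreserving.ae_eq_comp hg.coeFn_toL1] with x hsub hcomp hg₀ hgt
    rw [hsub, Pi.sub_apply, hcomp, hgt, hg₀]
    rfl
  have hcont : Continuous fun t => ∫ x, ‖g (x + t) - g x‖ ∂μ := by
    simp_rw [hL1]
    exact ((continuous_const.compMeasurePreservingLp shift.continuous hshift
      ENNReal.one_ne_top).sub continuous_const).norm
  simpa using hcont.tendsto 0

section PeriodicAveraging

variable {E : Type*} [NormedAddCommGroup E] [NormedSpace ℝ E]
  {g : ℝ → ℝ} {h : ℝ → E} {C : ℝ}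

theorem integrable_smul_comp_div_add (hg : Integrable g) (hh : StronglyMeasurable h)
    (hC : ∀ x, ‖h x‖ ≤ C) (ε v : ℝ) : Integrable fun x => g x • h (x / ε + v) :=
  hg.smul_bdd C
    (hh.comp_measurable ((measurable_id.div_const ε).add_const v)).aestronglyMeasurable
    (ae_of_all _ fun _ => hC _)

theorem integrable_uncurry_smul_comp_div_add (hg : Integrable g) (hh : StronglyMeasurable h)
    (hC : ∀ x, ‖h x‖ ≤ C) (ε : ℝ) {μ : Measure ℝ} [IsFiniteMeasure μ] :
    Integrable (Function.uncurry fun v x => g x • h (x / ε + v)) (μ.prod volume) := by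
  refine ((integrable_const C).mul_prod hg.norm).mono' ?_ (ae_of_all _ fun z => ?_)
  · exact hg.1.comp_snd.smul
      (hh.comp_measurable ((measurable_snd.div_const ε).add measurable_fst)).aestronglyMeasurable
  · change ‖g z.2 • h (z.2 / ε + z.1)‖ ≤ C * ‖g z.2‖
    rw [norm_smul, mul_comm C]
    exact mul_le_mul_of_nonneg_left (hC _) (norm_nonneg _)

variable [CompleteSpace E]

theorem intervalIntegral_integral_smul_comp_div_add (hg : Integrable g)
    (hh : StronglyMeasurable h) (hC : ∀ x, ‖h x‖ ≤ C) (hper : Function.Periodic h 1) (ε : ℝ) :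
    ∫ v in (0 : ℝ)..1, ∫ x, g x • h (x / ε + v) = (∫ x, g x) • ∫ v in (0 : ℝ)..1, h v := by
  have hmean (c : ℝ) : ∫ v in (0 : ℝ)..1, h (c + v) = ∫ v in (0 : ℝ)..1, h v := by
    rw [intervalIntegral.integral_comp_add_left]
    simpa using hper.intervalIntegral_add_eq c 0
  have : IsFiniteMeasure (volume.restrict (Set.uIoc (0 : ℝ) 1)) :=
    isFiniteMeasure_restrict.2 (by simp)
  rw [intervalIntegral_integral_swap (integrable_uncurry_smul_comp_div_add hg hh hC ε)]
  simp_rw [intervalIntegral.integral_smul, hmean]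
  exact integral_smul_const _ _

theorem norm_integral_smul_comp_div_sub_le (hg : Integrable g) (hh : StronglyMeasurable h)
    (hC : ∀ x, ‖h x‖ ≤ C) (hper : Function.Periodic h 1) {ε Δ : ℝ} (hε : 0 < ε)
    (hΔ : ∀ t ∈ Set.Ioc 0 ε, ∫ x, ‖g (x + t) - g x‖ ≤ Δ) :
    ‖(∫ x, g x • h (x / ε)) - (∫ x, g x) • ∫ v in (0 : ℝ)..1, h v‖ ≤ C * Δ := by
  set A := ∫ x, g x • h (x / ε)
  have hshift (v : ℝ) : A - ∫ x, g x • h (x / ε + v)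
      = ∫ x, (g (x + ε * v) - g x) • h (x / ε + v) := by
    have hA : ∫ x, g (x + ε * v) • h (x / ε + v) = A := by
      simpa only [add_div, mul_div_cancel_left₀ _ hε.ne'] using
        integral_add_right_eq_self (fun x => g x • h (x / ε)) (ε * v)
    simp_rw [← hA, sub_smul]
    refine (integral_sub ?_ (integrable_smul_comp_div_add hg hh hC ε v)).symm
    simpa using integrable_smul_comp_div_add (hg.comp_add_right (ε * v)) hh hC ε v
  have hclose : ∀ v ∈ Set.uIoc (0 : ℝ) 1, ‖A - ∫ x, g x • h (x / ε + v)‖ ≤ C * Δ := by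
    intro v hv
    rw [Set.uIoc_of_le zero_le_one] at hv
    have hC0 : 0 ≤ C := (norm_nonneg _).trans (hC 0)
    have hbound (x : ℝ) :
        ‖(g (x + ε * v) - g x) • h (x / ε + v)‖ ≤ C * ‖g (x + ε * v) - g x‖ := by
      rw [norm_smul, mul_comm]
      exact mul_le_mul_of_nonneg_right (hC _) (norm_nonneg _)
    rw [hshift]
    calc ‖∫ x, (g (x + ε * v) - g x) • h (x / ε + v)‖
        ≤ ∫ x, C * ‖g (x + ε * v) - g x‖ :=
          norm_integral_le_of_norm_le (((hg.comp_add_right _).sub hg).norm.const_mul C)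
            (ae_of_all _ hbound)
      _ = C * ∫ x, ‖g (x + ε * v) - g x‖ := integral_const_mul _ _
      _ ≤ C * Δ :=
          mul_le_mul_of_nonneg_left (hΔ _ ⟨mul_pos hε hv.1, by nlinarith [hv.2]⟩) hC0
  have : IsFiniteMeasure (volume.restrict (Set.uIoc (0 : ℝ) 1)) :=
    isFiniteMeasure_restrict.2 (by simp)
  have hI : IntervalIntegrable (fun v => ∫ x, g x • h (x / ε + v)) volume 0 1 :=
    intervalIntegrable_iff.2 (integrable_uncurry_smul_comp_div_add hg hh hC ε).integral_prod_left
  calc ‖A - (∫ x, g x) • ∫ v in (0 : ℝ)..1, h v‖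
      = ‖∫ v in (0 : ℝ)..1, (A - ∫ x, g x • h (x / ε + v))‖ := by
        rw [intervalIntegral.integral_sub intervalIntegrable_const hI,
          intervalIntegral_integral_smul_comp_div_add hg hh hC hper]
        simp
    _ ≤ C * Δ * |1 - 0| := intervalIntegral.norm_integral_le_of_norm_le_const hclose
    _ = C * Δ := by simp

theorem tendsto_integral_smul_comp_div (hg : Integrable g) (hh : StronglyMeasurable h)
    (hC : ∀ x, ‖h x‖ ≤ C) (hper : Function.Periodic h 1) :
    Tendsto (fun ε => ∫ x, g x • h (x / ε)) (𝓝[>] 0)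
      (𝓝 ((∫ x, g x) • ∫ v in (0 : ℝ)..1, h v)) := by
  have hC0 : 0 ≤ C := (norm_nonneg _).trans (hC 0)
  refine Metric.tendsto_nhds.2 fun δ hδ => ?_
  obtain ⟨η, hη, hsmall⟩ := Metric.eventually_nhds_iff.1 <|
    (tendsto_integral_norm_comp_add_sub hg).eventually
      (gt_mem_nhds (show (0 : ℝ) < δ / (C + 1) by positivity))
  filter_upwards [Ioo_mem_nhdsGT hη] with ε hε
  rw [dist_eq_norm]
  calc _ ≤ C * (δ / (C + 1)) :=
        norm_integral_smul_comp_div_sub_le hg hh hC hper hε.1 fun t ht =>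
          (hsmall (by rw [Real.dist_0_eq_abs, abs_of_pos ht.1]; linarith [ht.2, hε.2])).le
    _ < δ := by
      rw [mul_div_assoc', div_lt_iff₀ (by positivity)]
      nlinarith

end PeriodicAveraging

theorem intervalIntegral_comp_fract {E : Type*} [NormedAddCommGroup E] [NormedSpace ℝ E]
    (f : ℝ → E) : ∫ v in (0 : ℝ)..1, f (Int.fract v) = ∫ x in Set.Ioo (0 : ℝ) 1, f x := by
  rw [intervalIntegral.integral_of_le zero_le_one, integral_Ioc_eq_integral_Ioo]
  exact setIntegral_congr_fun measurableSet_Ioo fun x hx => by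
    rw [Int.fract_eq_self.2 ⟨hx.1.le, hx.2⟩]

/-- Kosulajeff's theorem: if `τ` has a Lebesgue density, then the fractional
part `{τ/ε}` converges in distribution to a uniform random variable on `(0,1)`
as `ε ↓ 0`. -/
theorem fract_tendsto_uniform {Ω : Type*} [MeasurableSpace Ω]
    (P : Measure Ω) [IsProbabilityMeasure P]
    (τ : Ω → ℝ) (hτ : Measurable τ)
    (hac : Measure.map τ P ≪ volume) :
    ∀ f : BoundedContinuousFunction ℝ ℝ,
      Tendsto (fun ε : ℝ => ∫ ω, f (Int.fract (τ ω / ε)) ∂P) (𝓝[>] (0:ℝ))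
        (𝓝 (∫ x in Set.Ioo (0:ℝ) 1, f x)) := by
  intro f
  set μ := Measure.map τ P
  have : IsProbabilityMeasure μ := Measure.isProbabilityMeasure_map hτ.aemeasurable
  have hdensity : ∫ x, (μ.rnDeriv volume x).toReal = 1 := by
    simp [Measure.integral_toReal_rnDeriv hac]
  have hlaw (ε : ℝ) : ∫ ω, f (Int.fract (τ ω / ε)) ∂P
      = ∫ x, (μ.rnDeriv volume x).toReal • f (Int.fract (x / ε)) := by
    rw [integral_rnDeriv_smul hac, integral_map hτ.aemeasurable]
    exact (f.continuous.measurable.comp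
      (measurable_fract.comp (measurable_id.div_const ε))).aestronglyMeasurable
  simp_rw [hlaw]
  simpa [hdensity, intervalIntegral_comp_fract] using
    tendsto_integral_smul_comp_div (Measure.integrable_toReal_rnDeriv (μ := μ))
      (f.continuous.stronglyMeasurable.comp_measurable measurable_fract)
      (fun _ => f.norm_coe_le_norm _) (fun x => by simp [Int.fract_add_one])
end

section
/- Let $X$ be a Lévy process such that $0$ is irregular for $(-\infty, 0)$, meaning that almost surely the first entrance time of $X$ into $(-\infty,0)$ is strictly positive. Suppose $(X_{\varepsilon t}/a_\varepsilon)_{t\ge0}$ converges weakly (Skorokhod topology) as $\varepsilon \downarrow 0$ to a non-trivial Lévy process $\hat X$. Then $\hat X$ is almost surely non-negative at all times, hence non-decreasing. -/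
/-!
Fix `t ≥ 0` and `η > 0`. Irregularity gives `h > 0` such that `X ≥ 0` on `[0, h]` with
probability at least `1 - η`; for `ε < h / t` the rescaled variable `X (ε t) / a ε` is then
non-negative with probability at least `1 - η`. Since `[0, ∞)` is closed, the portmanteau theorem
passes this bound to the limit law of `X̂ t`, so `X̂ t ≥ 0` almost surely. Monotonicity follows
because `X̂ t - X̂ s` has the law of `X̂ (t - s)`.
-/

open MeasureTheory Filter Topology ProbabilityTheory

/-- A Lévy process: starts at `0`, has stationary and independent increments,
and is continuous in probability. -/
def IsLevyProcess {Ω : Type*} [MeasurableSpace Ω] (μ : Measure Ω)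
    (X : ℝ → Ω → ℝ) : Prop :=
  (∀ᵐ ω ∂μ, X 0 ω = 0) ∧
  (∀ s t : ℝ, 0 ≤ s → 0 ≤ t →
    IdentDistrib (fun ω => X (s + t) ω - X s ω) (X t) μ μ) ∧
  (∀ (n : ℕ) (t : Fin (n + 1) → ℝ), Monotone t → (∀ i, 0 ≤ t i) →
    iIndepFun
      (fun (i : Fin n) ω => X (t i.succ) ω - X (t i.castSucc) ω) μ) ∧
  (∀ t : ℝ, 0 ≤ t → ∀ d > (0:ℝ),
    Tendsto (fun s => μ {ω | d < |X s ω - X t ω|}) (𝓝 t) (𝓝 0))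

open scoped ENNReal BoundedContinuousFunction

theorem le_measure_preimage_of_tendsto_integral {ι Ω Ω' E : Type*}
    [MeasurableSpace Ω] [MeasurableSpace Ω'] [TopologicalSpace E] [MeasurableSpace E]
    [OpensMeasurableSpace E] [HasOuterApproxClosed E]
    {μ : Measure Ω} {ν : Measure Ω'} [IsProbabilityMeasure μ] [IsProbabilityMeasure ν]
    {l : Filter ι} [l.NeBot] {Y : ι → Ω → E} {Z : Ω' → E}
    (hY : ∀ᶠ i in l, AEMeasurable (Y i) μ) (hZ : AEMeasurable Z ν)
    (hlim : ∀ f : E →ᵇ ℝ, Tendsto (fun i ↦ ∫ ω, f (Y i ω) ∂μ) l (𝓝 (∫ ω, f (Z ω) ∂ν)))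
    {F : Set E} (hF : IsClosed F) {c : ℝ≥0∞} (hc : ∀ᶠ i in l, c ≤ μ (Y i ⁻¹' F)) :
    c ≤ ν (Z ⁻¹' F) := by
  classical
  let P : ProbabilityMeasure Ω := ⟨μ, inferInstance⟩
  let Q : ProbabilityMeasure E := ProbabilityMeasure.map ⟨ν, inferInstance⟩ hZ
  let law : ι → ProbabilityMeasure E := fun i ↦ if h : AEMeasurable (Y i) μ then P.map h else Q
  have hlaw : ∀ᶠ i in l, AEMeasurable (Y i) μ ∧ (law i : Measure E) = μ.map (Y i) :=
    hY.mono fun i h ↦ ⟨h, by simp only [law, dif_pos h]; rfl⟩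
  have hQ : (Q : Measure E) = ν.map Z := rfl
  have hconv : Tendsto law l (𝓝 Q) := by
    refine ProbabilityMeasure.tendsto_iff_forall_integral_tendsto.2 fun f ↦ ?_
    rw [hQ, integral_map hZ f.continuous.aestronglyMeasurable]
    refine (hlim f).congr' (hlaw.mono fun i ⟨hYi, hi⟩ ↦ ?_)
    dsimp only
    rw [hi, integral_map hYi f.continuous.aestronglyMeasurable]
  calc c ≤ l.limsup fun i ↦ (law i : Measure E) F := by
        refine le_limsup_of_frequently_le ((hc.and hlaw).mono fun i ⟨hci, hYi, hi⟩ ↦ ?_).frequently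
          (by isBoundedDefault)
        rwa [hi, Measure.map_apply_of_aemeasurable hYi hF.measurableSet]
    _ ≤ (Q : Measure E) F := ProbabilityMeasure.limsup_measure_closed_le_of_tendsto hconv hF
    _ = ν (Z ⁻¹' F) := by rw [hQ, Measure.map_apply_of_aemeasurable hZ hF.measurableSet]

theorem ae_of_forall_one_sub_le_measure {Ω : Type*} [MeasurableSpace Ω] {μ : Measure Ω}
    [IsProbabilityMeasure μ] {p : Ω → Prop} (hp : NullMeasurableSet {ω | p ω} μ)
    (h : ∀ η > (0 : ℝ), 1 - ENNReal.ofReal η ≤ μ {ω | p ω}) : ∀ᵐ ω ∂μ, p ω := by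
  rw [ae_iff_measure_eq hp, measure_univ]
  refine le_antisymm prob_le_one (ENNReal.le_of_forall_pos_le_add fun η hη _ ↦ ?_)
  simpa using tsub_le_iff_right.1 (h η hη)

theorem eventually_le_measure_rescaled_nonneg {Ω : Type*} [MeasurableSpace Ω] {μ : Measure Ω}
    {X : ℝ → Ω → ℝ} {a : ℝ → ℝ} (ha : ∀ ε > (0 : ℝ), 0 < a ε) {c : ℝ≥0∞} {h : ℝ} (hh : 0 < h)
    (hc : c ≤ μ {ω | ∀ s ∈ Set.Icc 0 h, 0 ≤ X s ω}) {t : ℝ} (ht : 0 ≤ t) :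
    ∀ᶠ ε in 𝓝[>] 0, c ≤ μ {ω | 0 ≤ X (ε * t) ω / a ε} := by
  have hsmall : ∀ᶠ ε in 𝓝[>] (0 : ℝ), ε * t < h := by
    have hlim : Tendsto (fun ε ↦ ε * t) (𝓝 0) (𝓝 0) := by
      simpa using (continuous_mul_const t).tendsto 0
    exact nhdsWithin_le_nhds (hlim.eventually_lt_const hh)
  filter_upwards [self_mem_nhdsWithin, hsmall] with ε (hε : 0 < ε) hεt
  refine hc.trans (measure_mono fun ω hω ↦ div_nonneg (hω _ ⟨?_, hεt.le⟩) (ha ε hε).le)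
  positivity

namespace IsLevyProcess

variable {Ω : Type*} [MeasurableSpace Ω] {μ : Measure Ω} {X : ℝ → Ω → ℝ}

theorem aemeasurable (hX : IsLevyProcess μ X) {t : ℝ} (ht : 0 ≤ t) : AEMeasurable (X t) μ :=
  (hX.2.1 0 t le_rfl ht).aemeasurable_snd

theorem ae_le_of_ae_nonneg (hX : IsLevyProcess μ X) (hnonneg : ∀ t : ℝ, 0 ≤ t → ∀ᵐ ω ∂μ, 0 ≤ X t ω)
    {s t : ℝ} (hs : 0 ≤ s) (hst : s ≤ t) : ∀ᵐ ω ∂μ, X s ω ≤ X t ω := by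
  have hinc := hX.2.1 s (t - s) hs (sub_nonneg.2 hst)
  rw [add_sub_cancel] at hinc
  filter_upwards [hinc.symm.ae_mem_snd measurableSet_Ici (hnonneg _ (sub_nonneg.2 hst))]
    with ω hω
  exact sub_nonneg.1 hω

end IsLevyProcess

theorem irregular_implies_increasing_limit_general
    {Ω Ω' : Type*} [MeasurableSpace Ω] [MeasurableSpace Ω']
    (μ : Measure Ω) (ν : Measure Ω') [IsProbabilityMeasure μ] [IsProbabilityMeasure ν]
    (X : ℝ → Ω → ℝ) (Xh : ℝ → Ω' → ℝ)
    (hX : IsLevyProcess μ X) (hXh : IsLevyProcess ν Xh)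
    (hirr : ∀ η > (0:ℝ), ∃ h > (0:ℝ),
      1 - ENNReal.ofReal η ≤ μ {ω | ∀ t ∈ Set.Icc (0:ℝ) h, 0 ≤ X t ω})
    (a : ℝ → ℝ) (ha : ∀ ε > (0:ℝ), 0 < a ε)
    (hfdd : ∀ (n : ℕ) (t : Fin n → ℝ), (∀ i, 0 ≤ t i) →
      ∀ f : BoundedContinuousFunction (Fin n → ℝ) ℝ,
        Tendsto (fun ε => ∫ ω, f (fun i => X (ε * t i) ω / a ε) ∂μ) (𝓝[>] (0:ℝ))
          (𝓝 (∫ ω', f (fun i => Xh (t i) ω') ∂ν))) :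
    (∀ t : ℝ, 0 ≤ t → ∀ᵐ ω' ∂ν, 0 ≤ Xh t ω') ∧
    (∀ s t : ℝ, 0 ≤ s → s ≤ t → ∀ᵐ ω' ∂ν, Xh s ω' ≤ Xh t ω') := by
  have hnonneg : ∀ t : ℝ, 0 ≤ t → ∀ᵐ ω' ∂ν, 0 ≤ Xh t ω' := by
    intro t ht
    refine ae_of_forall_one_sub_le_measure
      ((hXh.aemeasurable ht).nullMeasurable measurableSet_Ici) fun η hη ↦ ?_
    obtain ⟨h, hh, hA⟩ := hirr η hη
    have hY : ∀ᶠ ε in 𝓝[>] (0 : ℝ), AEMeasurable (fun ω (_ : Fin 1) ↦ X (ε * t) ω / a ε) μ := by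
      filter_upwards [self_mem_nhdsWithin] with ε (hε : 0 < ε)
      exact aemeasurable_pi_lambda _ fun _ ↦
        (hX.aemeasurable (mul_nonneg hε.le ht)).div_const _
    exact le_measure_preimage_of_tendsto_integral hY
      (aemeasurable_pi_lambda _ fun _ ↦ hXh.aemeasurable ht) (hfdd 1 (fun _ ↦ t) fun _ ↦ ht)
      (isClosed_le continuous_const (continuous_apply 0))
      (eventually_le_measure_rescaled_nonneg ha hh hA ht)
  exact ⟨hnonneg, fun s t hs hst ↦ hXh.ae_le_of_ae_nonneg hnonneg hs hst⟩

/-- If `0` is irregular for `(-∞,0)` for the Lévy process `X` and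
`(X (ε t) / a ε)` converges weakly (here: in finite-dimensional distributions,
which for Lévy processes is equivalent to weak convergence on Skorokhod space)
to a non-trivial Lévy process `X̂`, then `X̂` is a.s. non-negative at every
time, hence non-decreasing. -/
theorem irregular_implies_increasing_limit
    {Ω Ω' : Type*} [MeasurableSpace Ω] [MeasurableSpace Ω']
    (μ : Measure Ω) (ν : Measure Ω') [IsProbabilityMeasure μ] [IsProbabilityMeasure ν]
    (X : ℝ → Ω → ℝ) (Xh : ℝ → Ω' → ℝ)
    (hX : IsLevyProcess μ X) (hXh : IsLevyProcess ν Xh)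
    (hirr : ∀ η > (0:ℝ), ∃ h > (0:ℝ),
      1 - ENNReal.ofReal η ≤ μ {ω | ∀ t ∈ Set.Icc (0:ℝ) h, 0 ≤ X t ω})
    (a : ℝ → ℝ) (ha : ∀ ε > (0:ℝ), 0 < a ε)
    (hfdd : ∀ (n : ℕ) (t : Fin n → ℝ), (∀ i, 0 ≤ t i) →
      ∀ f : BoundedContinuousFunction (Fin n → ℝ) ℝ,
        Tendsto (fun ε => ∫ ω, f (fun i => X (ε * t i) ω / a ε) ∂μ) (𝓝[>] (0:ℝ))
          (𝓝 (∫ ω', f (fun i => Xh (t i) ω') ∂ν)))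
    (hnontriv : ∃ t ≥ (0:ℝ), 0 < ν {ω' | Xh t ω' ≠ 0}) :
    (∀ t : ℝ, 0 ≤ t → ∀ᵐ ω' ∂ν, 0 ≤ Xh t ω') ∧
    (∀ s t : ℝ, 0 ≤ s → s ≤ t → ∀ᵐ ω' ∂ν, Xh s ω' ≤ Xh t ω') :=
  irregular_implies_increasing_limit_general μ ν X Xh hX hXh hirr a ha hfdd
end
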